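/- arXiv:1008.5090 — 9 statements merged into one kernel-verified Lean document; each statement's English description precedes it below -/
import Mathlib

section
/- Let K be a symmetric positive semidefinite nonzero ℓ×ℓ real matrix and f : ℝ^ℓ → ℝ a convex function bounded below. Then the functional F(c) = f(Kc) + (1/2)cᵀKc attains its minimum over ℝ^ℓ. -/
open scoped Matrix
open scoped MatrixOrder

/-- existence of a minimizer of `F(c) = f(Kc) + (1/2) cᵀKc` for `K`
nonzero symmetric positive semidefinite and `f` convex bounded below. -/
theorem stmt_1 {ℓ : ℕ} (K : Matrix (Fin ℓ) (Fin ℓ) ℝ) (hK : K.PosSemidef) (hK0 : K ≠ 0)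
    (f : (Fin ℓ → ℝ) → ℝ) (hf : ConvexOn ℝ Set.univ f) (hbdd : BddBelow (Set.range f)) :
    ∃ cstar : Fin ℓ → ℝ, ∀ c : Fin ℓ → ℝ,
      f (K.mulVec cstar) + (1 / 2) * (cstar ⬝ᵥ K.mulVec cstar) ≤
        f (K.mulVec c) + (1 / 2) * (c ⬝ᵥ K.mulVec c) := by
  classical
  obtain ⟨m, hm⟩ := hbdd
  have hm' : ∀ y, m ≤ f y := fun y => hm ⟨y, rfl⟩
  set A := CFC.sqrt K with hA
  have hAps : A.PosSemidef := Matrix.nonneg_iff_posSemidef.mp (CFC.sqrt_nonneg K)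
  have hAA : A * A = K := CFC.sqrt_mul_sqrt_self K (Matrix.nonneg_iff_posSemidef.mpr hK)
  have hAsym : Aᵀ = A := hAps.isHermitian
  have key1 : ∀ c, K.mulVec c = A.mulVec (A.mulVec c) := by
    intro c; rw [Matrix.mulVec_mulVec, hAA]
  have key2 : ∀ c, c ⬝ᵥ K.mulVec c = (A.mulVec c) ⬝ᵥ (A.mulVec c) := by
    intro c
    rw [key1, Matrix.dotProduct_mulVec, ← Matrix.mulVec_transpose, hAsym]
  set G : (Fin ℓ → ℝ) → ℝ := fun y => f (A.mulVec y) + (1 / 2) * (y ⬝ᵥ y) with hGdef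
  have hFG : ∀ c, f (K.mulVec c) + (1 / 2) * (c ⬝ᵥ K.mulVec c) = G (A.mulVec c) := by
    intro c; simp only [hGdef]; rw [key2, key1]
  have hfc : Continuous f := by
    exact continuousOn_univ.mp (hf.continuousOn isOpen_univ)
  have hGc : Continuous G := by
    apply Continuous.add
    · exact hfc.comp (Continuous.matrix_mulVec continuous_const continuous_id)
    · exact continuous_const.mul ((continuous_id.dotProduct continuous_id))
  -- the range of A is a closed set
  set S : Set (Fin ℓ → ℝ) := Set.range A.mulVec with hSdef
  have hSclosed : IsClosed S := by
    have : S = (LinearMap.range A.mulVecLin : Submodule ℝ (Fin ℓ → ℝ)) := by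
      ext y
      simp [hSdef, LinearMap.mem_range, Matrix.mulVecLin_apply]
    rw [this]
    exact Submodule.closed_of_finiteDimensional _
  have hf0m : 0 ≤ f 0 - m := by linarith [hm' 0]
  set R : ℝ := Real.sqrt (2 * (f 0 - m) + 2) with hRdef
  have hR2 : R ^ 2 = 2 * (f 0 - m) + 2 := by
    rw [hRdef, Real.sq_sqrt]; linarith
  have hR0 : 0 ≤ R := Real.sqrt_nonneg _
  -- dot product dominates sup norm squared
  have hnorm : ∀ y : Fin ℓ → ℝ, ‖y‖ ^ 2 ≤ y ⬝ᵥ y := by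
    intro y
    have hy0 : 0 ≤ y ⬝ᵥ y := Finset.sum_nonneg fun i _ => mul_self_nonneg (y i)
    have h1 : ‖y‖ ≤ Real.sqrt (y ⬝ᵥ y) := by
      apply pi_norm_le_iff_of_nonneg (Real.sqrt_nonneg _) |>.2
      intro i
      rw [Real.norm_eq_abs, ← Real.sqrt_sq_eq_abs]
      apply Real.sqrt_le_sqrt
      have : y i ^ 2 = y i * y i := sq (y i) ▸ pow_two (y i)
      rw [this]
      exact Finset.single_le_sum (f := fun j => y j * y j)
        (fun j _ => mul_self_nonneg _) (Finset.mem_univ i)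
    calc ‖y‖ ^ 2 ≤ Real.sqrt (y ⬝ᵥ y) ^ 2 := by
          apply pow_le_pow_left₀ (norm_nonneg _) h1
      _ = y ⬝ᵥ y := Real.sq_sqrt hy0
  have hT : IsCompact (S ∩ Metric.closedBall 0 R) :=
    (isCompact_closedBall (0 : Fin ℓ → ℝ) R).inter_left hSclosed
  have h0mem : (0 : Fin ℓ → ℝ) ∈ S ∩ Metric.closedBall 0 R :=
    ⟨⟨0, Matrix.mulVec_zero A⟩, Metric.mem_closedBall_self hR0⟩
  obtain ⟨ystar, hymem, hymin⟩ := hT.exists_isMinOn ⟨0, h0mem⟩ hGc.continuousOn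
  obtain ⟨cstar, hcstar⟩ := hymem.1
  have hG0 : G 0 = f 0 := by simp [hGdef]
  have hystar_le : G ystar ≤ f 0 := hG0 ▸ hymin h0mem
  refine ⟨cstar, fun c => ?_⟩
  rw [hFG, hFG, hcstar]
  by_cases hc : A.mulVec c ∈ Metric.closedBall 0 R
  · exact hymin ⟨⟨c, rfl⟩, hc⟩
  · -- outside the ball: G is large
    have hnr : R < ‖A.mulVec c‖ := by
      simpa [Metric.mem_closedBall, dist_zero_right, not_le] using hc
    have h1 : R ^ 2 < (A.mulVec c) ⬝ᵥ (A.mulVec c) := by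
      calc R ^ 2 < ‖A.mulVec c‖ ^ 2 := by
            apply pow_lt_pow_left₀ hnr hR0 (by norm_num)
        _ ≤ _ := hnorm _
    have : f 0 < G (A.mulVec c) := by
      have := hm' (A.mulVec (A.mulVec c))
      simp only [hGdef]
      nlinarith [hR2]
    linarith [hystar_le]
end

section
/- Let f : ℝ^ℓ → ℝ be convex and K symmetric positive semidefinite. A vector c* minimizes F(c) = f(Kc) + (1/2)cᵀKc if and only if 0 ∈ K·(∂f(Kc*) + c*), where ∂f denotes the subdifferential of f. -/
open scoped Matrix

/-- The subdifferential of a finite-valued function on `ℝ^ℓ` (with the Euclidean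
inner product given by the dot product). -/
def subdiffV {ℓ : ℕ} (f : (Fin ℓ → ℝ) → ℝ) (x : Fin ℓ → ℝ) : Set (Fin ℓ → ℝ) :=
  {ξ | ∀ y, ξ ⬝ᵥ (y - x) ≤ f y - f x}

/-- `c*` minimizes `F(c) = f(Kc) + (1/2) cᵀKc` iff
`0 ∈ K·(∂f(Kc*) + c*)`. -/
theorem stmt_2 {ℓ : ℕ} (K : Matrix (Fin ℓ) (Fin ℓ) ℝ) (hK : K.PosSemidef)
    (f : (Fin ℓ → ℝ) → ℝ) (hf : ConvexOn ℝ Set.univ f)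
    (cstar : Fin ℓ → ℝ) :
    (∀ c : Fin ℓ → ℝ,
        f (K.mulVec cstar) + (1 / 2) * (cstar ⬝ᵥ K.mulVec cstar) ≤
          f (K.mulVec c) + (1 / 2) * (c ⬝ᵥ K.mulVec c)) ↔
      (0 : Fin ℓ → ℝ) ∈ (fun ξ => K.mulVec (ξ + cstar)) '' subdiffV f (K.mulVec cstar) := by
  have hsymm : ∀ v w : Fin ℓ → ℝ, v ⬝ᵥ K.mulVec w = w ⬝ᵥ K.mulVec v := by
    intro v w
    have hs : Kᵀ = K := hK.1
    rw [Matrix.dotProduct_mulVec, ← Matrix.mulVec_transpose, hs, dotProduct_comm]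
  have hpsd : ∀ v : Fin ℓ → ℝ, 0 ≤ v ⬝ᵥ K.mulVec v := fun v => by simpa using hK.dotProduct_mulVec_nonneg v
  set x₀ : Fin ℓ → ℝ := K.mulVec cstar with hx0
  constructor
  · -- hard direction
    intro hmin
    set quot : (Fin ℓ → ℝ) → ℝ → ℝ := fun x t => (f (x₀ + t • x) - f x₀) / t with hquot
    have hcx : ∀ x : Fin ℓ → ℝ, x ∈ Set.univ := fun x => Set.mem_univ x
    have hmono : ∀ (x : Fin ℓ → ℝ) (s t : ℝ), 0 < s → s ≤ t → quot x s ≤ quot x t := by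
      intro x s t hs hst
      have ht : 0 < t := hs.trans_le hst
      have key : f (x₀ + s • x) ≤ (1 - s / t) * f x₀ + (s / t) * f (x₀ + t • x) := by
        have h1 : (0:ℝ) ≤ 1 - s / t := by
          rw [sub_nonneg, div_le_one ht]; exact hst
        have h2 : (0:ℝ) ≤ s / t := by positivity
        have h3 : (1 - s / t) + s / t = 1 := by ring
        have hcvx := hf.2 (hcx x₀) (hcx (x₀ + t • x)) h1 h2 h3
        have heq : (1 - s / t) • x₀ + (s / t) • (x₀ + t • x) = x₀ + s • x := by
          rw [smul_add, smul_smul, div_mul_cancel₀ s ht.ne', ← add_assoc, ← add_smul, h3,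
            one_smul]
        rw [heq] at hcvx
        simpa [smul_eq_mul] using hcvx
      have e1 : t * ((1 - s / t) * f x₀ + (s / t) * f (x₀ + t • x))
          = (t - s) * f x₀ + s * f (x₀ + t • x) := by
        field_simp
      have key2 : t * f (x₀ + s • x) ≤ (t - s) * f x₀ + s * f (x₀ + t • x) :=
        (mul_le_mul_of_nonneg_left key ht.le).trans_eq e1
      show (f (x₀ + s • x) - f x₀) / s ≤ (f (x₀ + t • x) - f x₀) / t
      rw [div_le_div_iff₀ hs ht]
      nlinarith [key2]
    have hlb : ∀ (x : Fin ℓ → ℝ) (t : ℝ), 0 < t → f x₀ - f (x₀ - x) ≤ quot x t := by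
      intro x t ht
      have ht1 : (0:ℝ) < t + 1 := by linarith
      have key : f x₀ ≤ (t / (t+1)) * f (x₀ - x) + (1 / (t+1)) * f (x₀ + t • x) := by
        have h1 : (0:ℝ) ≤ t / (t+1) := by positivity
        have h2 : (0:ℝ) ≤ 1 / (t+1) := by positivity
        have h3 : t / (t+1) + 1 / (t+1) = 1 := by field_simp
        have hcvx := hf.2 (hcx (x₀ - x)) (hcx (x₀ + t • x)) h1 h2 h3
        have heq : (t / (t+1)) • (x₀ - x) + (1 / (t+1)) • (x₀ + t • x) = x₀ := by
          match_scalars <;> field_simp <;> ring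
        rw [heq] at hcvx
        simpa [smul_eq_mul] using hcvx
      have e2 : (t+1) * ((t / (t+1)) * f (x₀ - x) + (1 / (t+1)) * f (x₀ + t • x))
          = t * f (x₀ - x) + f (x₀ + t • x) := by
        field_simp
      have key2 : (t+1) * f x₀ ≤ t * f (x₀ - x) + f (x₀ + t • x) :=
        (mul_le_mul_of_nonneg_left key ht1.le).trans_eq e2
      show f x₀ - f (x₀ - x) ≤ (f (x₀ + t • x) - f x₀) / t
      rw [le_div_iff₀ ht]
      nlinarith [key2]
    haveI : Nonempty {t : ℝ // 0 < t} := ⟨⟨1, one_pos⟩⟩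
    set N : (Fin ℓ → ℝ) → ℝ := fun x => ⨅ t : {t : ℝ // 0 < t}, quot x t with hN
    have hbdd : ∀ x : Fin ℓ → ℝ, BddBelow (Set.range fun t : {t : ℝ // 0 < t} => quot x t) := by
      intro x
      exact ⟨f x₀ - f (x₀ - x), by rintro _ ⟨t, rfl⟩; exact hlb x t t.2⟩
    have hNle : ∀ (x : Fin ℓ → ℝ) (t : ℝ), 0 < t → N x ≤ quot x t := by
      intro x t ht
      exact ciInf_le (hbdd x) ⟨t, ht⟩
    have hleN : ∀ (x : Fin ℓ → ℝ) (a : ℝ), (∀ t : ℝ, 0 < t → a ≤ quot x t) → a ≤ N x := by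
      intro x a h
      exact le_ciInf fun t => h t t.2
    -- positive homogeneity
    have quotscale : ∀ (x : Fin ℓ → ℝ) (c t : ℝ), 0 < c → 0 < t →
        quot (c • x) t = c * quot x (t * c) := by
      intro x c t hc ht
      show (f (x₀ + t • c • x) - f x₀) / t = c * ((f (x₀ + (t*c) • x) - f x₀) / (t*c))
      rw [smul_smul]
      field_simp
    have N_hom : ∀ c : ℝ, 0 < c → ∀ x : Fin ℓ → ℝ, N (c • x) = c * N x := by
      intro c hc x
      apply le_antisymm
      · have h : N (c • x) / c ≤ N x := by
          apply hleN
          intro t ht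
          rw [div_le_iff₀' hc]
          have h1 : N (c • x) ≤ quot (c • x) (t / c) := hNle _ _ (by positivity)
          have h2 : quot (c • x) (t / c) = c * quot x (t / c * c) :=
            quotscale x c (t/c) hc (by positivity)
          rw [div_mul_cancel₀ t hc.ne'] at h2
          linarith
        calc N (c • x) = c * (N (c • x) / c) := by field_simp
          _ ≤ c * N x := by
              exact mul_le_mul_of_nonneg_left h hc.le
      · apply hleN
        intro t ht
        rw [quotscale x c t hc ht]
        have := hNle x (t * c) (by positivity)
        nlinarith
    -- subadditivity
    have quotadd : ∀ (x y : Fin ℓ → ℝ) (t : ℝ), 0 < t →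
        quot (x + y) t ≤ quot x (2*t) + quot y (2*t) := by
      intro x y t ht
      have key : f (x₀ + t • (x + y))
          ≤ (1/2) * f (x₀ + (2*t) • x) + (1/2) * f (x₀ + (2*t) • y) := by
        have hcvx := hf.2 (hcx (x₀ + (2*t) • x)) (hcx (x₀ + (2*t) • y))
          (by norm_num : (0:ℝ) ≤ 1/2) (by norm_num : (0:ℝ) ≤ 1/2) (by norm_num : (1:ℝ)/2 + 1/2 = 1)
        have heq : (1/2 : ℝ) • (x₀ + (2*t) • x) + (1/2 : ℝ) • (x₀ + (2*t) • y)
            = x₀ + t • (x + y) := by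
          match_scalars <;> ring
        rw [heq] at hcvx
        simpa [smul_eq_mul] using hcvx
      show (f (x₀ + t • (x+y)) - f x₀) / t
          ≤ (f (x₀ + (2*t) • x) - f x₀) / (2*t) + (f (x₀ + (2*t) • y) - f x₀) / (2*t)
      rw [← add_div, div_le_div_iff₀ ht (by positivity : (0:ℝ) < 2*t)]
      nlinarith [key]
    have N_add : ∀ x y : Fin ℓ → ℝ, N (x + y) ≤ N x + N y := by
      intro x y
      apply le_of_forall_pos_le_add
      intro ε hε
      obtain ⟨t₁, ht₁⟩ := exists_lt_of_ciInf_lt (show N x < N x + ε/2 by linarith)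
      obtain ⟨t₂, ht₂⟩ := exists_lt_of_ciInf_lt (show N y < N y + ε/2 by linarith)
      set t : ℝ := min t₁.1 t₂.1 / 2 with hts
      have ht : 0 < t := by
        apply div_pos _ two_pos
        exact lt_min t₁.2 t₂.2
      have h2t1 : 2 * t ≤ t₁.1 := by
        rw [hts, mul_div_cancel₀ _ (by norm_num : (2:ℝ) ≠ 0)]
        exact min_le_left _ _
      have h2t2 : 2 * t ≤ t₂.1 := by
        rw [hts, mul_div_cancel₀ _ (by norm_num : (2:ℝ) ≠ 0)]
        exact min_le_right _ _
      calc N (x + y) ≤ quot (x + y) t := hNle _ _ ht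
        _ ≤ quot x (2*t) + quot y (2*t) := quotadd x y t ht
        _ ≤ quot x t₁.1 + quot y t₂.1 :=
            add_le_add (hmono x _ _ (by positivity) h2t1) (hmono y _ _ (by positivity) h2t2)
        _ ≤ (N x + ε/2) + (N y + ε/2) := add_le_add ht₁.le ht₂.le
        _ = N x + N y + ε := by ring
    -- the lower bound from minimality, on the range of K
    have keyC0 : ∀ (d : Fin ℓ → ℝ) (s : ℝ), 0 < s →
        -(cstar ⬝ᵥ K.mulVec d) - (s/2) * (d ⬝ᵥ K.mulVec d) ≤ quot (K.mulVec d) s := by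
      intro d s hs
      have h := hmin (cstar + s • d)
      have hKc : K.mulVec (cstar + s • d) = x₀ + s • K.mulVec d := by
        rw [Matrix.mulVec_add, Matrix.mulVec_smul, hx0]
      have hquad : (cstar + s • d) ⬝ᵥ K.mulVec (cstar + s • d)
          = cstar ⬝ᵥ K.mulVec cstar + 2 * s * (cstar ⬝ᵥ K.mulVec d)
            + s^2 * (d ⬝ᵥ K.mulVec d) := by
        simp [Matrix.mulVec_add, Matrix.mulVec_smul, dotProduct_add,
          add_dotProduct, dotProduct_smul, smul_dotProduct,
          smul_eq_mul, hsymm d cstar]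
        ring
      rw [hquad, hKc] at h
      rw [← hx0] at h
      show -(cstar ⬝ᵥ K.mulVec d) - (s/2) * (d ⬝ᵥ K.mulVec d)
          ≤ (f (x₀ + s • K.mulVec d) - f x₀) / s
      rw [le_div_iff₀ hs]
      nlinarith [h]
    have keyC : ∀ (d : Fin ℓ → ℝ) (t : ℝ), 0 < t →
        -(cstar ⬝ᵥ K.mulVec d) ≤ quot (K.mulVec d) t := by
      intro d t ht
      apply le_of_forall_pos_le_add
      intro ε hε
      set M : ℝ := d ⬝ᵥ K.mulVec d with hM
      have hM0 : 0 ≤ M := hpsd d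
      set s : ℝ := min t (2*ε/(M+1)) with hsdef
      have hs : 0 < s := lt_min ht (by positivity)
      have hst : s ≤ t := min_le_left _ _
      have hsε : (s/2) * M ≤ ε := by
        have h1 : s ≤ 2*ε/(M+1) := min_le_right _ _
        have h2 : s * (M+1) ≤ 2*ε := by
          rw [← le_div_iff₀ (by positivity : (0:ℝ) < M+1)]
          exact h1
        nlinarith [hs.le, hM0]
      calc -(cstar ⬝ᵥ K.mulVec d) ≤ quot (K.mulVec d) s + (s/2) * M := by
            have h := keyC0 d s hs
            rw [← hM] at h
            linarith
        _ ≤ quot (K.mulVec d) t + ε := add_le_add (hmono _ _ _ hs hst) hsε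
    -- Hahn-Banach extension
    set p : Submodule ℝ (Fin ℓ → ℝ) := LinearMap.range (Matrix.mulVecLin K) with hp
    set Ldual : (Fin ℓ → ℝ) →ₗ[ℝ] ℝ :=
      { toFun := fun v => -(cstar ⬝ᵥ v)
        map_add' := by
          intro a b
          simp only [dotProduct_add]
          ring
        map_smul' := by
          intro c a
          simp only [dotProduct_smul, smul_eq_mul, RingHom.id_apply]
          ring } with hLd
    set L : (Fin ℓ → ℝ) →ₗ.[ℝ] ℝ := ⟨p, Ldual.comp p.subtype⟩ with hL
    have hfLN : ∀ x : L.domain, L x ≤ N x := by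
      rintro ⟨x, hx⟩
      obtain ⟨d, rfl⟩ := hx
      have hv : L ⟨Matrix.mulVecLin K d, ⟨d, rfl⟩⟩ = -(cstar ⬝ᵥ K.mulVec d) := rfl
      rw [hv]
      exact hleN _ _ (fun t ht => by
        simpa [Matrix.mulVecLin_apply] using keyC d t ht)
    obtain ⟨g, hg1, hg2⟩ := exists_extension_of_le_sublinear L N N_hom N_add hfLN
    -- extract the subgradient vector
    set ξ : Fin ℓ → ℝ := fun i => g (Pi.single i 1) with hξ
    have hgv : ∀ v : Fin ℓ → ℝ, g v = ξ ⬝ᵥ v := by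
      intro v
      have hv : v = ∑ i, v i • (fun j => if i = j then (1:ℝ) else 0) := pi_eq_sum_univ v
      conv_lhs => rw [hv]
      rw [map_sum, dotProduct]
      apply Finset.sum_congr rfl
      intro i _
      rw [map_smul, smul_eq_mul]
      have hsingle : (fun j => if i = j then (1:ℝ) else 0) = Pi.single i 1 := by
        ext j
        simp [Pi.single_apply, eq_comm]
      rw [hsingle, mul_comm]
    have hsub : ξ ∈ subdiffV f x₀ := by
      intro y
      have h1 : g (y - x₀) ≤ N (y - x₀) := hg2 _
      have h2 : N (y - x₀) ≤ quot (y - x₀) 1 := hNle _ 1 one_pos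
      have h3 : quot (y - x₀) 1 = f y - f x₀ := by
        show (f (x₀ + (1:ℝ) • (y - x₀)) - f x₀) / 1 = f y - f x₀
        simp
      rw [hgv] at h1
      linarith
    have hker : K.mulVec (ξ + cstar) = 0 := by
      have hgK : ∀ v : Fin ℓ → ℝ, (ξ + cstar) ⬝ᵥ K.mulVec v = 0 := by
        intro v
        have hmem : K.mulVec v ∈ p := ⟨v, rfl⟩
        have h := hg1 ⟨K.mulVec v, hmem⟩
        have hLval : L ⟨K.mulVec v, hmem⟩ = -(cstar ⬝ᵥ K.mulVec v) := rfl
        rw [hLval] at h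
        have h' : ξ ⬝ᵥ K.mulVec v = -(cstar ⬝ᵥ K.mulVec v) := by
          rw [← hgv]; exact h
        rw [add_dotProduct]
        linarith
      apply (hK.dotProduct_mulVec_zero_iff (ξ + cstar)).mp
      simpa using hgK (ξ + cstar)
    exact ⟨ξ, hsub, hker⟩
  · -- easy direction
    rintro ⟨ξ, hξ, h0⟩ c
    have h0' : K.mulVec (ξ + cstar) = 0 := h0
    have hKξc : ξ ⬝ᵥ K.mulVec c = -(cstar ⬝ᵥ K.mulVec c) := by
      have hz : (ξ + cstar) ⬝ᵥ K.mulVec c = 0 := by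
        rw [hsymm (ξ + cstar) c, h0', dotProduct_zero]
      rw [add_dotProduct] at hz
      linarith
    have hKξs : ξ ⬝ᵥ K.mulVec cstar = -(cstar ⬝ᵥ K.mulVec cstar) := by
      have hz : (ξ + cstar) ⬝ᵥ K.mulVec cstar = 0 := by
        rw [hsymm (ξ + cstar) cstar, h0', dotProduct_zero]
      rw [add_dotProduct] at hz
      linarith
    have hA := hξ (K.mulVec c)
    rw [dotProduct_sub, hx0, hKξc, hKξs] at hA
    have hB : 0 ≤ (c - cstar) ⬝ᵥ K.mulVec (c - cstar) := hpsd _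
    have hexp : (c - cstar) ⬝ᵥ K.mulVec (c - cstar)
        = c ⬝ᵥ K.mulVec c - 2 * (cstar ⬝ᵥ K.mulVec c) + cstar ⬝ᵥ K.mulVec cstar := by
      rw [Matrix.mulVec_sub, sub_dotProduct, dotProduct_sub,
        dotProduct_sub, hsymm c cstar]
      ring
    rw [hexp] at hB
    show f (K.mulVec cstar) + (1/2) * (cstar ⬝ᵥ K.mulVec cstar)
        ≤ f (K.mulVec c) + (1/2) * (c ⬝ᵥ K.mulVec c)
    linarith
end

section
/- Let f : ℝ^ℓ → ℝ be convex and K symmetric positive semidefinite. If c satisfies 0 ∈ ∂f(Kc) + c, then c minimizes F(c) = f(Kc) + (1/2)cᵀKc. -/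
open scoped Matrix

/-- if `0 ∈ ∂f(Kc) + c` (i.e. `-c ∈ ∂f(Kc)`), then `c` minimizes
`F(c) = f(Kc) + (1/2) cᵀKc`. -/
theorem stmt_3 {ℓ : ℕ} (K : Matrix (Fin ℓ) (Fin ℓ) ℝ) (hK : K.PosSemidef)
    (f : (Fin ℓ → ℝ) → ℝ) (hf : ConvexOn ℝ Set.univ f)
    (c : Fin ℓ → ℝ) (hc : -c ∈ subdiffV f (K.mulVec c)) :
    ∀ c' : Fin ℓ → ℝ,
      f (K.mulVec c) + (1 / 2) * (c ⬝ᵥ K.mulVec c) ≤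
        f (K.mulVec c') + (1 / 2) * (c' ⬝ᵥ K.mulVec c') := by
  intro c'
  have hsub := hc (K.mulVec c')
  have hpos : 0 ≤ (c' - c) ⬝ᵥ K.mulVec (c' - c) := by
    have := hK.dotProduct_mulVec_nonneg (c' - c); rwa [star_trivial] at this
  have hsym : c ⬝ᵥ K.mulVec c' = c' ⬝ᵥ K.mulVec c := by
    have hKT : Kᵀ = K := hK.1
    rw [Matrix.dotProduct_mulVec, ← Matrix.vecMul_transpose, hKT,
      dotProduct_comm]
  have hexp : (c' - c) ⬝ᵥ K.mulVec (c' - c)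
      = c' ⬝ᵥ K.mulVec c' - c ⬝ᵥ K.mulVec c' - (c' ⬝ᵥ K.mulVec c - c ⬝ᵥ K.mulVec c) := by
    simp [Matrix.mulVec_sub, sub_dotProduct, dotProduct_sub]
  have hdot : (-c) ⬝ᵥ (K.mulVec c' - K.mulVec c)
      = -(c ⬝ᵥ K.mulVec c') + c ⬝ᵥ K.mulVec c := by
    rw [dotProduct_sub, neg_dotProduct, neg_dotProduct]
    ring
  rw [hdot] at hsub
  nlinarith [hsub, hpos, hexp, hsym]
end

section
/- Let f : ℝ^ℓ → ℝ be convex, K symmetric positive semidefinite, and suppose c* minimizes F(c) = f(Kc) + (1/2)cᵀKc. Then there exists an optimal c (also minimizing F) such that −c ∈ ∂f(Kc). -/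
open scoped Matrix

/-- Separation lemma: if `ψ` is convex, finite, `ψ 0 = 0`, and `ψ ≥ 0` on a subspace `V`,
then there is `ζ` orthogonal to `V` with `ζ ⬝ᵥ x ≤ ψ x` for all `x`. -/
theorem exists_subgradient_orth {ℓ : ℕ} (ψ : (Fin ℓ → ℝ) → ℝ)
    (hψ : ConvexOn ℝ Set.univ ψ) (h0 : ψ 0 = 0)
    (V : Submodule ℝ (Fin ℓ → ℝ)) (hV : ∀ v ∈ V, 0 ≤ ψ v) :
    ∃ ζ : Fin ℓ → ℝ, (∀ v ∈ V, ζ ⬝ᵥ v = 0) ∧ ∀ x, ζ ⬝ᵥ x ≤ ψ x := by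
  have hψc : Continuous ψ := by
    rw [← continuousOn_univ]
    exact hψ.continuousOn isOpen_univ
  have hAopen : IsOpen {p : (Fin ℓ → ℝ) × ℝ | ψ p.1 < p.2} :=
    isOpen_lt (hψc.comp continuous_fst) continuous_snd
  have hAconv : Convex ℝ {p : (Fin ℓ → ℝ) × ℝ | ψ p.1 < p.2} := by
    intro p hp q hq a b ha hb hab
    have hcomb := hψ.2 (Set.mem_univ p.1) (Set.mem_univ q.1) ha hb hab
    simp only [Set.mem_setOf_eq] at hp hq ⊢
    simp only [smul_eq_mul, Prod.fst_add, Prod.snd_add, Prod.smul_fst, Prod.smul_snd,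
      smul_eq_mul] at *
    rcases ha.lt_or_eq with ha' | ha'
    · nlinarith [mul_lt_mul_of_pos_left hp ha', mul_le_mul_of_nonneg_left hq.le hb]
    · have hb1 : b = 1 := by linarith
      have ha0 : a = 0 := ha'.symm
      subst ha0; subst hb1
      nlinarith
  have hBconv : Convex ℝ ((V.prod (⊥ : Submodule ℝ ℝ) : Submodule ℝ ((Fin ℓ → ℝ) × ℝ)) :
      Set ((Fin ℓ → ℝ) × ℝ)) := (V.prod ⊥).convex
  have hdisj : Disjoint {p : (Fin ℓ → ℝ) × ℝ | ψ p.1 < p.2}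
      ((V.prod (⊥ : Submodule ℝ ℝ) : Submodule ℝ ((Fin ℓ → ℝ) × ℝ)) : Set ((Fin ℓ → ℝ) × ℝ)) := by
    rw [Set.disjoint_left]
    rintro ⟨x, r⟩ hx hxB
    rcases (Submodule.mem_prod.mp hxB) with ⟨hxV, hr⟩
    simp only [Submodule.mem_bot] at hr
    have h1 : (0 : ℝ) ≤ ψ x := hV x hxV
    simp only [Set.mem_setOf_eq] at hx
    rw [hr] at hx
    linarith
  obtain ⟨L, u, hAu, hBu⟩ := geometric_hahn_banach_open hAconv hAopen hBconv hdisj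
  have hu0 : u ≤ 0 := by
    have h0B : ((0, 0) : (Fin ℓ → ℝ) × ℝ) ∈
        ((V.prod (⊥ : Submodule ℝ ℝ)) : Set ((Fin ℓ → ℝ) × ℝ)) := (V.prod ⊥).zero_mem
    have := hBu _ h0B
    rwa [show ((0, 0) : (Fin ℓ → ℝ) × ℝ) = 0 from rfl, map_zero] at this
  have hβneg : L (0, 1) < 0 := by
    have h1A : ((0 : Fin ℓ → ℝ), (1 : ℝ)) ∈ {p : (Fin ℓ → ℝ) × ℝ | ψ p.1 < p.2} := by
      simp only [Set.mem_setOf_eq, h0]; norm_num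
    have := hAu _ h1A
    linarith
  have hLsplit : ∀ (x : Fin ℓ → ℝ) (r : ℝ), L (x, r) = L (x, 0) + r * L (0, 1) := by
    intro x r
    have hpr : (x, r) = (x, (0 : ℝ)) + r • ((0 : Fin ℓ → ℝ), (1 : ℝ)) := by
      simp [Prod.ext_iff]
    rw [hpr, map_add, map_smul, smul_eq_mul]
  have horthL : ∀ v ∈ V, L (v, 0) = 0 := by
    intro v hv
    by_contra h
    have hall : ∀ t : ℝ, u ≤ t * L (v, 0) := by
      intro t
      have hmem : ((t • v, (0 : ℝ)) : (Fin ℓ → ℝ) × ℝ) ∈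
          ((V.prod (⊥ : Submodule ℝ ℝ)) : Set ((Fin ℓ → ℝ) × ℝ)) :=
        Submodule.mem_prod.mpr ⟨V.smul_mem t hv, Submodule.zero_mem _⟩
      have h1 := hBu _ hmem
      have heq : ((t • v, (0 : ℝ)) : (Fin ℓ → ℝ) × ℝ) = t • ((v, (0 : ℝ))) := by
        simp [Prod.ext_iff]
      rw [heq, map_smul, smul_eq_mul] at h1
      exact h1
    have h2 := hall ((u - 1) / L (v, 0))
    rw [div_mul_cancel₀ _ h] at h2
    linarith
  have hkey : ∀ x : Fin ℓ → ℝ, L (x, 0) + ψ x * L (0, 1) ≤ 0 := by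
    intro x
    by_contra h
    push_neg at h
    have hε : ∀ ε : ℝ, 0 < ε →
        L (x, 0) + ψ x * L (0, 1) + ε * L (0, 1) < 0 := by
      intro ε hε
      have hmemA : ((x, ψ x + ε) : (Fin ℓ → ℝ) × ℝ) ∈
          {p : (Fin ℓ → ℝ) × ℝ | ψ p.1 < p.2} := by
        simp only [Set.mem_setOf_eq]; linarith
      have h1 := hAu _ hmemA
      rw [hLsplit] at h1
      nlinarith
    have hβne : L (0, 1) ≠ 0 := ne_of_lt hβneg
    have hpos : 0 < (L (x, 0) + ψ x * L (0, 1)) / (2 * (-L (0, 1))) :=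
      div_pos h (by linarith)
    have h2 := hε _ hpos
    have h3 : (L (x, 0) + ψ x * L (0, 1)) / (2 * (-L (0, 1))) * L (0, 1) =
        -(L (x, 0) + ψ x * L (0, 1)) / 2 := by
      field_simp
    rw [h3] at h2
    linarith
  -- the linear functional x ↦ L (x, 0) as a dot product
  have hgdot : ∀ x : Fin ℓ → ℝ,
      (fun i => L ((fun j => if i = j then (1:ℝ) else 0), 0) / (-L (0, 1))) ⬝ᵥ x =
        L (x, 0) / (-L (0, 1)) := by
    intro x
    have hg : (L.toLinearMap.comp (LinearMap.inl ℝ (Fin ℓ → ℝ) ℝ)) x = L (x, 0) := rfl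
    rw [← hg, LinearMap.pi_apply_eq_sum_univ (L.toLinearMap.comp (LinearMap.inl ℝ (Fin ℓ → ℝ) ℝ)) x]
    simp only [dotProduct, Finset.sum_div, smul_eq_mul]
    refine Finset.sum_congr rfl fun i _ => ?_
    have hgi : (L.toLinearMap.comp (LinearMap.inl ℝ (Fin ℓ → ℝ) ℝ))
        (fun j => if i = j then (1:ℝ) else 0) = L ((fun j => if i = j then (1:ℝ) else 0), 0) := rfl
    rw [hgi]
    ring
  refine ⟨fun i => L ((fun j => if i = j then (1:ℝ) else 0), 0) / (-L (0, 1)), ?_, ?_⟩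
  · intro v hv
    rw [hgdot v, horthL v hv, zero_div]
  · intro x
    rw [hgdot x]
    have h1 := hkey x
    have hpos : (0 : ℝ) < -L (0, 1) := by linarith
    rw [div_le_iff₀ hpos]
    nlinarith
/-- if `c*` minimizes `F(c) = f(Kc) + (1/2) cᵀKc`, then there is a
(possibly different) minimizer `c` with `-c ∈ ∂f(Kc)`. -/
theorem stmt_4 {ℓ : ℕ} (K : Matrix (Fin ℓ) (Fin ℓ) ℝ) (hK : K.PosSemidef)
    (f : (Fin ℓ → ℝ) → ℝ) (hf : ConvexOn ℝ Set.univ f)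
    (cstar : Fin ℓ → ℝ)
    (hmin : ∀ c : Fin ℓ → ℝ,
      f (K.mulVec cstar) + (1 / 2) * (cstar ⬝ᵥ K.mulVec cstar) ≤
        f (K.mulVec c) + (1 / 2) * (c ⬝ᵥ K.mulVec c)) :
    ∃ c : Fin ℓ → ℝ,
      (∀ c' : Fin ℓ → ℝ,
        f (K.mulVec c) + (1 / 2) * (c ⬝ᵥ K.mulVec c) ≤
          f (K.mulVec c') + (1 / 2) * (c' ⬝ᵥ K.mulVec c')) ∧
      -c ∈ subdiffV f (K.mulVec c) := by
  classical
  have hKT : Kᵀ = K := by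
    have h := hK.1
    rwa [Matrix.IsHermitian, Matrix.conjTranspose_eq_transpose_of_trivial] at h
  have hsymm : ∀ v w : Fin ℓ → ℝ, v ⬝ᵥ K.mulVec w = w ⬝ᵥ K.mulVec v := by
    intro v w
    rw [Matrix.dotProduct_mulVec, ← Matrix.mulVec_transpose, hKT,
      dotProduct_comm (K.mulVec v) w]
  have hψconv : ConvexOn ℝ Set.univ
      (fun x => f (K.mulVec cstar + x) - f (K.mulVec cstar) + cstar ⬝ᵥ x) := by
    refine ⟨convex_univ, ?_⟩
    intro x _ y _ a b ha hb hab
    show f (K.mulVec cstar + (a • x + b • y)) - f (K.mulVec cstar) + cstar ⬝ᵥ (a • x + b • y) ≤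
      a • (f (K.mulVec cstar + x) - f (K.mulVec cstar) + cstar ⬝ᵥ x) +
        b • (f (K.mulVec cstar + y) - f (K.mulVec cstar) + cstar ⬝ᵥ y)
    have hcomb : K.mulVec cstar + (a • x + b • y) =
        a • (K.mulVec cstar + x) + b • (K.mulVec cstar + y) := by
      have h1 : K.mulVec cstar = a • K.mulVec cstar + b • K.mulVec cstar := by
        rw [← add_smul, hab, one_smul]
      nth_rewrite 1 [h1]
      rw [smul_add, smul_add]
      abel
    have hfc := hf.2 (Set.mem_univ (K.mulVec cstar + x)) (Set.mem_univ (K.mulVec cstar + y))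
      ha hb hab
    simp only [smul_eq_mul] at hfc ⊢
    rw [hcomb, dotProduct_add, dotProduct_smul, dotProduct_smul]
    have hfx : f (K.mulVec cstar) = (a + b) * f (K.mulVec cstar) := by rw [hab, one_mul]
    simp only [smul_eq_mul]
    nlinarith [hfc, hfx]
  have hψ0 : (fun x => f (K.mulVec cstar + x) - f (K.mulVec cstar) + cstar ⬝ᵥ x) 0 = 0 := by
    simp
  have hψV : ∀ v ∈ LinearMap.range K.mulVecLin,
      0 ≤ (fun x => f (K.mulVec cstar + x) - f (K.mulVec cstar) + cstar ⬝ᵥ x) v := by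
    rintro _ ⟨d, rfl⟩
    rw [Matrix.mulVecLin_apply]
    show 0 ≤ f (K.mulVec cstar + K.mulVec d) - f (K.mulVec cstar) + cstar ⬝ᵥ K.mulVec d
    have hq : ∀ t : ℝ, (cstar + t • d) ⬝ᵥ K.mulVec (cstar + t • d) =
        cstar ⬝ᵥ K.mulVec cstar + 2 * t * (cstar ⬝ᵥ K.mulVec d) +
          t ^ 2 * (d ⬝ᵥ K.mulVec d) := by
      intro t
      rw [Matrix.mulVec_add, Matrix.mulVec_smul]
      simp only [dotProduct_add, add_dotProduct, smul_dotProduct,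
        dotProduct_smul, smul_eq_mul]
      linear_combination t * (hsymm d cstar)
    have hstep : ∀ t : ℝ, 0 < t → t ≤ 1 →
        0 ≤ t * (f (K.mulVec cstar + K.mulVec d) - f (K.mulVec cstar) + cstar ⬝ᵥ K.mulVec d) +
          t ^ 2 / 2 * (d ⬝ᵥ K.mulVec d) := by
      intro t ht ht1
      have hmin' := hmin (cstar + t • d)
      have hKc : K.mulVec (cstar + t • d) =
          (1 - t) • K.mulVec cstar + t • (K.mulVec cstar + K.mulVec d) := by
        rw [Matrix.mulVec_add, Matrix.mulVec_smul]
        module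
      have hfc : f (K.mulVec (cstar + t • d)) ≤
          (1 - t) * f (K.mulVec cstar) + t * f (K.mulVec cstar + K.mulVec d) := by
        rw [hKc]
        have := hf.2 (Set.mem_univ (K.mulVec cstar))
          (Set.mem_univ (K.mulVec cstar + K.mulVec d))
          (by linarith : (0:ℝ) ≤ 1 - t) ht.le (by ring)
        simpa [smul_eq_mul] using this
      rw [hq t] at hmin'
      nlinarith [hmin', hfc]
    by_contra h
    push_neg at h
    have hqnn : 0 ≤ d ⬝ᵥ K.mulVec d := by simpa using hK.dotProduct_mulVec_nonneg d
    rcases eq_or_lt_of_le hqnn with hq0 | hqpos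
    · have h1 := hstep 1 one_pos le_rfl
      rw [← hq0] at h1
      norm_num at h1
      linarith
    · have htpos : 0 < min 1 ((-(f (K.mulVec cstar + K.mulVec d) - f (K.mulVec cstar) +
          cstar ⬝ᵥ K.mulVec d)) / (d ⬝ᵥ K.mulVec d)) :=
        lt_min one_pos (div_pos (by linarith) hqpos)
      have ht1 : min 1 ((-(f (K.mulVec cstar + K.mulVec d) - f (K.mulVec cstar) +
          cstar ⬝ᵥ K.mulVec d)) / (d ⬝ᵥ K.mulVec d)) ≤ 1 := min_le_left _ _
      have h1 := hstep _ htpos ht1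
      have ht2 : min 1 ((-(f (K.mulVec cstar + K.mulVec d) - f (K.mulVec cstar) +
          cstar ⬝ᵥ K.mulVec d)) / (d ⬝ᵥ K.mulVec d)) ≤
          (-(f (K.mulVec cstar + K.mulVec d) - f (K.mulVec cstar) +
          cstar ⬝ᵥ K.mulVec d)) / (d ⬝ᵥ K.mulVec d) := min_le_right _ _
      have htq : min 1 ((-(f (K.mulVec cstar + K.mulVec d) - f (K.mulVec cstar) +
          cstar ⬝ᵥ K.mulVec d)) / (d ⬝ᵥ K.mulVec d)) * (d ⬝ᵥ K.mulVec d) ≤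
          -(f (K.mulVec cstar + K.mulVec d) - f (K.mulVec cstar) + cstar ⬝ᵥ K.mulVec d) := by
        rw [← le_div_iff₀ hqpos]
        exact ht2
      nlinarith [h1, htq, htpos]
  obtain ⟨ζ, hζorth, hζsub⟩ := exists_subgradient_orth _ hψconv hψ0 _ hψV
  have hζK : ∀ d : Fin ℓ → ℝ, ζ ⬝ᵥ K.mulVec d = 0 := fun d =>
    hζorth _ ⟨d, Matrix.mulVecLin_apply _ _⟩
  have hKζ : K.mulVec ζ = 0 := by
    funext i
    have h1 := hζK (fun j => if j = i then 1 else 0)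
    rw [hsymm] at h1
    have h2 : (fun j => if j = i then (1:ℝ) else 0) ⬝ᵥ K.mulVec ζ = (K.mulVec ζ) i := by
      simp [dotProduct]
    rw [h2] at h1
    exact h1
  have hKc : K.mulVec (cstar - ζ) = K.mulVec cstar := by
    rw [Matrix.mulVec_sub, hKζ, sub_zero]
  refine ⟨cstar - ζ, ?_, ?_⟩
  · intro c'
    have hquad : (cstar - ζ) ⬝ᵥ K.mulVec cstar = cstar ⬝ᵥ K.mulVec cstar := by
      rw [sub_dotProduct, hζK cstar, sub_zero]
    rw [hKc, hquad]
    exact hmin c'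
  · intro y
    rw [hKc]
    have h1 := hζsub (y - K.mulVec cstar)
    simp only [add_sub_cancel] at h1
    have hexp : (-(cstar - ζ)) ⬝ᵥ (y - K.mulVec cstar) =
        ζ ⬝ᵥ (y - K.mulVec cstar) - cstar ⬝ᵥ (y - K.mulVec cstar) := by
      rw [neg_sub, sub_dotProduct]
    rw [hexp]
    linarith
end

section
/- Let K be a symmetric positive definite matrix, f convex, α satisfying 0 < α < 2/‖K‖₂, and J_α = (I + α(∂f)^{-1})^{-1} (a nonexpansive map). Then the map A(c) = −J_α(αKc − c) is a contraction, hence has a unique fixed point c*, and the Picard iterates c^{k+1} = A(c^k) converge to c* at a linear rate: ‖c^{k+1} − c*‖ ≤ μ‖c^k − c*‖ for some 0 ≤ μ < 1. -/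
open scoped RealInnerProductSpace

/-- Subdifferential of a finite-valued function on a real inner product space. -/
def subdiffE {E : Type*} [NormedAddCommGroup E] [InnerProductSpace ℝ E]
    (f : E → ℝ) (x : E) : Set E :=
  {ξ | ∀ y, ⟪ξ, y - x⟫ ≤ f y - f x}

-- pointwise strict contraction of x ↦ α•Kx - x
lemma aux_pointwise {n : ℕ} (K : Matrix (Fin n) (Fin n) ℝ) (hK : K.PosDef)
    (α : ℝ) (hα : 0 < α)
    (hα2 : α * ‖Matrix.toEuclideanCLM (𝕜 := ℝ) (n := Fin n) K‖ < 2) :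
    ∀ x : EuclideanSpace ℝ (Fin n), x ≠ 0 →
      ‖α • Matrix.toEuclideanCLM (𝕜 := ℝ) (n := Fin n) K x - x‖ < ‖x‖ := by
  intro x hx
  set Kc := Matrix.toEuclideanCLM (𝕜 := ℝ) (n := Fin n) K with hKc
  open scoped MatrixOrder in
  set S := CFC.sqrt K with hSdef
  have hS : S.PosSemidef := by
    open scoped MatrixOrder in exact Matrix.nonneg_iff_posSemidef.mp (CFC.sqrt_nonneg K)
  have hSK : S * S = K := by
    open scoped MatrixOrder in exact CFC.sqrt_mul_sqrt_self K hK.posSemidef.nonneg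
  set Sc := Matrix.toEuclideanCLM (𝕜 := ℝ) (n := Fin n) S with hScdef
  have hmul : Kc = Sc * Sc := by rw [hKc, hScdef, ← map_mul, hSK]
  have hstar : star Sc = Sc := by
    rw [hScdef, ← map_star]
    congr 1
    exact hS.1
  have hadj : ContinuousLinearMap.adjoint Sc = Sc := by
    rw [← ContinuousLinearMap.star_eq_adjoint, hstar]
  have hnorm : ‖Kc‖ = ‖Sc‖ * ‖Sc‖ := by
    have h := ContinuousLinearMap.norm_adjoint_comp_self Sc
    rw [hadj] at h
    rw [hmul, ContinuousLinearMap.mul_def]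
    exact h
  have hScx : ‖Sc x‖ ^ 2 = ⟪x, Kc x⟫ := by
    rw [← real_inner_self_eq_norm_sq]
    calc ⟪Sc x, Sc x⟫ = ⟪x, ContinuousLinearMap.adjoint Sc (Sc x)⟫ :=
          (ContinuousLinearMap.adjoint_inner_right Sc _ _).symm
    _ = ⟪x, Kc x⟫ := by rw [hadj, hmul, ContinuousLinearMap.mul_apply]
  have hx' : (WithLp.equiv 2 (Fin n → ℝ)) x ≠ 0 := by
    simpa using hx
  have hpos : 0 < ⟪x, Kc x⟫ := by
    have h := hK.dotProduct_mulVec_pos hx'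
    rw [EuclideanSpace.inner_eq_star_dotProduct, hKc, Matrix.ofLp_toEuclideanCLM,
      dotProduct_comm]
    exact h
  have hKcx : ‖Kc x‖ ^ 2 ≤ ‖Kc‖ * ⟪x, Kc x⟫ := by
    have h1 : ‖Kc x‖ = ‖Sc (Sc x)‖ := by rw [hmul, ContinuousLinearMap.mul_apply]
    rw [h1, ← hScx, hnorm]
    calc ‖Sc (Sc x)‖ ^ 2 ≤ (‖Sc‖ * ‖Sc x‖) ^ 2 := by
          have h2 := Sc.le_opNorm (Sc x)
          have h3 : (0:ℝ) ≤ ‖Sc (Sc x)‖ := norm_nonneg _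
          nlinarith
    _ = ‖Sc‖ * ‖Sc‖ * ‖Sc x‖ ^ 2 := by ring
  have expand : ‖α • Kc x - x‖ ^ 2 = α^2 * ‖Kc x‖^2 - 2*α*⟪x, Kc x⟫ + ‖x‖^2 := by
    rw [norm_sub_sq_real, norm_smul, real_inner_smul_left, real_inner_comm (Kc x) x,
      Real.norm_eq_abs, abs_of_pos hα]
    ring
  have key : ‖α • Kc x - x‖ ^ 2 < ‖x‖ ^ 2 := by
    have h4 : α^2 * ‖Kc x‖^2 ≤ α^2 * (‖Kc‖ * ⟪x, Kc x⟫) :=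
      mul_le_mul_of_nonneg_left hKcx (sq_nonneg α)
    nlinarith [mul_pos hα hpos]
  exact lt_of_pow_lt_pow_left₀ 2 (norm_nonneg x) key

/-- for `K` symmetric positive definite, `f` convex,
`0 < α < 2/‖K‖₂`, and `J_α` the (nonexpansive) resolvent of `(∂f)⁻¹`, the map
`A(c) = −J_α(αKc − c)` is a contraction: it has a unique fixed point `c*` and
Picard iterates converge to `c*` at a linear rate `μ < 1`. -/
theorem stmt_8 {n : ℕ} (K : Matrix (Fin n) (Fin n) ℝ) (hK : K.PosDef)
    (f : EuclideanSpace ℝ (Fin n) → ℝ) (hf : ConvexOn ℝ Set.univ f)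
    (α : ℝ) (hα : 0 < α) (hα2 : α < 2 / ‖Matrix.toEuclideanCLM (𝕜 := ℝ) (n := Fin n) K‖)
    (J : EuclideanSpace ℝ (Fin n) → EuclideanSpace ℝ (Fin n))
    (hJne : ∀ v w, ‖J v - J w‖ ≤ ‖v - w‖)
    (hJ : ∀ v, ∃ z, J v ∈ subdiffE f z ∧ v = J v + α • z) :
    ∃ cstar : EuclideanSpace ℝ (Fin n),
      -J (α • Matrix.toEuclideanCLM (𝕜 := ℝ) (n := Fin n) K cstar - cstar) = cstar ∧
      (∀ c, -J (α • Matrix.toEuclideanCLM (𝕜 := ℝ) (n := Fin n) K c - c) = c → c = cstar) ∧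
      ∃ μ : ℝ, 0 ≤ μ ∧ μ < 1 ∧
        ∀ c : ℕ → EuclideanSpace ℝ (Fin n),
          (∀ k, c (k + 1) =
            -J (α • Matrix.toEuclideanCLM (𝕜 := ℝ) (n := Fin n) K (c k) - c k)) →
          (∀ k, ‖c (k + 1) - cstar‖ ≤ μ * ‖c k - cstar‖) ∧
            Filter.Tendsto c Filter.atTop (nhds cstar) := by
  set Kc := Matrix.toEuclideanCLM (𝕜 := ℝ) (n := Fin n) K with hKc
  have hKnorm_pos : 0 < ‖Kc‖ := by
    by_contra h
    push_neg at h
    have h0 : ‖Kc‖ = 0 := le_antisymm h (norm_nonneg _)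
    rw [h0, div_zero] at hα2
    linarith
  have hα2' : α * ‖Kc‖ < 2 := (lt_div_iff₀ hKnorm_pos).mp hα2
  set T : EuclideanSpace ℝ (Fin n) →L[ℝ] EuclideanSpace ℝ (Fin n) := α • Kc - 1 with hT
  have hTapp : ∀ x, T x = α • Kc x - x := by
    intro x
    simp [hT]
  have hpt : ∀ x : EuclideanSpace ℝ (Fin n), x ≠ 0 → ‖T x‖ < ‖x‖ := by
    intro x hx
    rw [hTapp]
    exact aux_pointwise K hK α hα hα2' x hx
  have hTlt : ‖T‖ < 1 := by
    by_cases hex : ∃ x : EuclideanSpace ℝ (Fin n), x ≠ 0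
    · obtain ⟨x, hx⟩ := hex
      have hsph : (Metric.sphere (0 : EuclideanSpace ℝ (Fin n)) 1).Nonempty := by
        refine ⟨‖x‖⁻¹ • x, ?_⟩
        rw [Metric.mem_sphere, dist_zero_right, norm_smul, norm_inv, norm_norm,
          inv_mul_cancel₀ (norm_ne_zero_iff.mpr hx)]
      obtain ⟨x₀, hx₀mem, hx₀max⟩ :=
        (isCompact_sphere (0 : EuclideanSpace ℝ (Fin n)) 1).exists_isMaxOn hsph
          (T.continuous.norm.continuousOn)
      have hx₀norm : ‖x₀‖ = 1 := by
        simpa using hx₀mem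
      have hx₀ne : x₀ ≠ 0 := by
        intro h
        rw [h, norm_zero] at hx₀norm
        norm_num at hx₀norm
      have hmax : ∀ y : EuclideanSpace ℝ (Fin n), ‖y‖ = 1 → ‖T y‖ ≤ ‖T x₀‖ := by
        intro y hy
        exact hx₀max (by simp [hy])
      have hle : ‖T‖ ≤ ‖T x₀‖ := by
        apply ContinuousLinearMap.opNorm_le_bound _ (norm_nonneg _)
        intro y
        rcases eq_or_ne y 0 with rfl | hy
        · simp
        · have hyn : 0 < ‖y‖ := norm_pos_iff.mpr hy
          have h1 : ‖T (‖y‖⁻¹ • y)‖ ≤ ‖T x₀‖ :=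
            hmax _ (by rw [norm_smul, norm_inv, norm_norm, inv_mul_cancel₀ hyn.ne'])
          rw [map_smul, norm_smul, norm_inv, norm_norm] at h1
          calc ‖T y‖ = ‖y‖ * (‖y‖⁻¹ * ‖T y‖) := by field_simp
          _ ≤ ‖y‖ * ‖T x₀‖ := mul_le_mul_of_nonneg_left h1 hyn.le
          _ = ‖T x₀‖ * ‖y‖ := mul_comm _ _
      calc ‖T‖ ≤ ‖T x₀‖ := hle
      _ < ‖x₀‖ := hpt x₀ hx₀ne
      _ = 1 := hx₀norm
    · push_neg at hex
      have hT0 : T = 0 := by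
        ext y
        rw [hex y]
        simp
      rw [hT0, norm_zero]
      norm_num
  set A : EuclideanSpace ℝ (Fin n) → EuclideanSpace ℝ (Fin n) := fun c => -J (T c) with hA
  have hAfix : ∀ c, A c = -J (α • Kc c - c) := by
    intro c
    show -J (T c) = -J (α • Kc c - c)
    rw [hTapp]
  have hlip : ∀ a b, ‖A a - A b‖ ≤ ‖T‖ * ‖a - b‖ := by
    intro a b
    have h1 : ‖A a - A b‖ = ‖J (T a) - J (T b)‖ := by
      rw [hA]
      simp only [neg_sub_neg, norm_sub_rev]
    rw [h1]
    calc ‖J (T a) - J (T b)‖ ≤ ‖T a - T b‖ := hJne _ _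
    _ = ‖T (a - b)‖ := by rw [map_sub]
    _ ≤ ‖T‖ * ‖a - b‖ := T.le_opNorm _
  have hCW : ContractingWith ‖T‖₊ A := by
    constructor
    · exact_mod_cast hTlt
    · apply LipschitzWith.of_dist_le_mul
      intro a b
      rw [dist_eq_norm, dist_eq_norm]
      exact_mod_cast hlip a b
  have hfix : A (ContractingWith.fixedPoint A hCW) = ContractingWith.fixedPoint A hCW :=
    hCW.fixedPoint_isFixedPt
  refine ⟨ContractingWith.fixedPoint A hCW, ?_, ?_, ‖T‖, norm_nonneg _, hTlt, ?_⟩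
  · rw [← hAfix]
    exact hfix
  · intro c hc
    rw [← hAfix c] at hc
    exact hCW.fixedPoint_unique hc
  · intro c hrec
    constructor
    · intro k
      have h1 : c (k + 1) = A (c k) := by rw [hrec k, hAfix]
      rw [h1]
      calc ‖A (c k) - ContractingWith.fixedPoint A hCW‖
          = ‖A (c k) - A (ContractingWith.fixedPoint A hCW)‖ := by rw [hfix]
      _ ≤ ‖T‖ * ‖c k - ContractingWith.fixedPoint A hCW‖ := hlip _ _
    · have hiter : ∀ k, c k = A^[k] (c 0) := by
        intro k
        induction k with
        | zero => simp
        | succ k ih => rw [Function.iterate_succ_apply', ← ih, hrec k, hAfix]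
      have hc : c = fun k => A^[k] (c 0) := funext hiter
      rw [hc]
      exact hCW.tendsto_iterate_fixedPoint (c 0)
end

section
/- Let K be a nonzero symmetric positive semidefinite ℓ×ℓ matrix, f : ℝ^ℓ → ℝ convex and bounded below, 0 < α < 2/‖K‖₂, and let c* satisfy c* = −J_α(αKc* − c*) where J_α = (I + α(∂f)^{-1})^{-1}. If c^{k+1} = −J_α(αKc^k − c^k), then setting r^k = c^k − c* and v^k = projection of r^k onto the range of K, one has ‖r^{k+1}‖² ≤ ‖r^k‖² − β‖v^k‖² with β = min{αλ(2 − αλ) : λ a nonzero eigenvalue of K} > 0. Consequently ‖v^k‖ → 0 and K r^k → 0. -/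
open scoped RealInnerProductSpace

lemma aux_tendsto_real {a w : ℕ → ℝ} {β : ℝ} (hβ : 0 < β) (h0 : ∀ k, 0 ≤ a k)
    (hw : ∀ k, 0 ≤ w k) (h : ∀ k, a (k + 1) ≤ a k - β * w k) :
    Filter.Tendsto w Filter.atTop (nhds 0) := by
  have hanti : Antitone a := by
    apply antitone_nat_of_succ_le
    intro k
    have := h k
    have := mul_nonneg hβ.le (hw k)
    linarith
  have hbdd' : BddBelow (Set.range a) := ⟨0, by rintro x ⟨k, rfl⟩; exact h0 k⟩
  have htend : Filter.Tendsto a Filter.atTop (nhds (⨅ k, a k)) :=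
    tendsto_atTop_ciInf hanti hbdd'
  have h2 : Filter.Tendsto (fun k => a (k + 1)) Filter.atTop (nhds (⨅ k, a k)) :=
    htend.comp (Filter.tendsto_add_atTop_nat 1)
  have hdiff : Filter.Tendsto (fun k => a k - a (k + 1)) Filter.atTop (nhds 0) := by
    simpa using htend.sub h2
  apply squeeze_zero hw (g := fun k => (a k - a (k + 1)) / β)
  · intro k
    rw [le_div_iff₀ hβ]
    have := h k
    linarith [mul_comm (w k) β]
  · simpa using hdiff.div_const β

/-- descent estimate for the fixed-point iteration
`c^{k+1} = −J_α(αKc^k − c^k)`: with `r^k = c^k − c*` decomposed orthogonally as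
`u^k + v^k` (nullspace/range of `K`), one has
`‖r^{k+1}‖² ≤ ‖r^k‖² − β‖v^k‖²` with
`β = min{αλ(2−αλ) : λ nonzero eigenvalue of K} > 0`; hence `‖v^k‖ → 0` and
`K r^k → 0`. -/
theorem stmt_9 {ℓ : ℕ} (K : Matrix (Fin ℓ) (Fin ℓ) ℝ) (hK : K.PosSemidef) (hK0 : K ≠ 0)
    (f : EuclideanSpace ℝ (Fin ℓ) → ℝ) (hf : ConvexOn ℝ Set.univ f)
    (hbdd : BddBelow (Set.range f))
    (α : ℝ) (hα : 0 < α) (hα2 : α < 2 / ‖Matrix.toEuclideanCLM (𝕜 := ℝ) (n := Fin ℓ) K‖)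
    (J : EuclideanSpace ℝ (Fin ℓ) → EuclideanSpace ℝ (Fin ℓ))
    (hJne : ∀ v w, ‖J v - J w‖ ≤ ‖v - w‖)
    (hJ : ∀ v, ∃ z, J v ∈ subdiffE f z ∧ v = J v + α • z)
    (cstar : EuclideanSpace ℝ (Fin ℓ))
    (hcstar : cstar = -J (α • Matrix.toEuclideanCLM (𝕜 := ℝ) (n := Fin ℓ) K cstar - cstar))
    (c : ℕ → EuclideanSpace ℝ (Fin ℓ))
    (hc : ∀ k, c (k + 1) =
      -J (α • Matrix.toEuclideanCLM (𝕜 := ℝ) (n := Fin ℓ) K (c k) - c k))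
    (u v : ℕ → EuclideanSpace ℝ (Fin ℓ))
    (hdec : ∀ k, c k - cstar = u k + v k)
    (hu : ∀ k, Matrix.toEuclideanCLM (𝕜 := ℝ) (n := Fin ℓ) K (u k) = 0)
    (hv : ∀ k, ∃ w, v k = Matrix.toEuclideanCLM (𝕜 := ℝ) (n := Fin ℓ) K w)
    (horth : ∀ k, ⟪u k, v k⟫ = (0 : ℝ))
    (β : ℝ)
    (hβ : β = sInf {x : ℝ | ∃ i, hK.1.eigenvalues i ≠ 0 ∧
      x = α * hK.1.eigenvalues i * (2 - α * hK.1.eigenvalues i)}) :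
    0 < β ∧
      (∀ k, ‖c (k + 1) - cstar‖ ^ 2 ≤ ‖c k - cstar‖ ^ 2 - β * ‖v k‖ ^ 2) ∧
      Filter.Tendsto (fun k => ‖v k‖) Filter.atTop (nhds 0) ∧
      Filter.Tendsto (fun k => Matrix.toEuclideanCLM (𝕜 := ℝ) (n := Fin ℓ) K (c k - cstar))
        Filter.atTop (nhds 0) := by
  set A := Matrix.toEuclideanCLM (𝕜 := ℝ) (n := Fin ℓ) K with hAdef
  set B := hK.1.eigenvectorBasis with hBdef
  set ev := hK.1.eigenvalues with hevdef
  -- eigenvector equation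
  have hAB : ∀ j, A (B j) = ev j • B j := by
    intro j
    apply (WithLp.equiv 2 _).injective
    rw [hAdef, WithLp.equiv_apply, Matrix.ofLp_toEuclideanCLM]
    ext i
    simpa using congrFun (hK.1.mulVec_eigenvectorBasis j) i
  -- symmetry
  have hsymm : ∀ x y : EuclideanSpace ℝ (Fin ℓ), ⟪A x, y⟫ = ⟪x, A y⟫ := by
    intro x y
    have h := (Matrix.isHermitian_iff_isSymmetric.mp hK.1) x y
    have hx : ∀ z, A z = Matrix.toEuclideanLin K z := by
      intro z; rw [hAdef, ← Matrix.coe_toEuclideanCLM_eq_toEuclideanLin]; rfl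
    rw [hx, hx]; exact h
  -- coordinates
  have hcoordA : ∀ (x : EuclideanSpace ℝ (Fin ℓ)) i, B.repr (A x) i = ev i * B.repr x i := by
    intro x i
    rw [B.repr_apply_apply, B.repr_apply_apply, ← hsymm, hAB, real_inner_smul_left]
  have hnorm : ∀ x : EuclideanSpace ℝ (Fin ℓ), ‖x‖ ^ 2 = ∑ i, (B.repr x i) ^ 2 := by
    intro x
    rw [← LinearIsometryEquiv.norm_map B.repr x, EuclideanSpace.norm_eq,
      Real.sq_sqrt (by positivity)]
    simp [sq_abs]
  -- eigenvalue bounds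
  have hev0 : ∀ i, 0 ≤ ev i := fun i => hK.eigenvalues_nonneg i
  have hev_le : ∀ i, ev i ≤ ‖A‖ := by
    intro i
    have h1 : ‖A (B i)‖ ≤ ‖A‖ * ‖B i‖ := A.le_opNorm _
    rw [hAB i, norm_smul, B.orthonormal.1 i] at h1
    simp only [mul_one] at h1
    exact le_trans (le_abs_self _) h1
  -- nonzero eigenvalue exists
  have hexists : ∃ i, ev i ≠ 0 := by
    by_contra h
    push_neg at h
    apply hK0
    have hAx : ∀ x, A x = 0 := by
      intro x
      calc A x = A (∑ i, B.repr x i • B i) := by rw [B.sum_repr]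
        _ = ∑ i, B.repr x i • A (B i) := by rw [map_sum]; simp_rw [map_smul]
        _ = 0 := by simp [hAB, h]
    exact (Matrix.toEuclideanCLM (𝕜 := ℝ) (n := Fin ℓ)).injective
      (by rw [map_zero]; exact ContinuousLinearMap.ext hAx)
  have hAnorm : 0 < ‖A‖ := by
    obtain ⟨i, hi⟩ := hexists
    have := hev_le i
    have := hev0 i
    rcases lt_or_eq_of_le (hev0 i) with h | h
    · linarith
    · exact absurd h.symm hi
  have hαA : α * ‖A‖ < 2 := by
    rw [← lt_div_iff₀ hAnorm] at *
    exact hα2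
  -- the set S of values
  set S : Set ℝ := {x : ℝ | ∃ i, ev i ≠ 0 ∧ x = α * ev i * (2 - α * ev i)} with hSdef
  have hSfin : S.Finite := by
    apply Set.Finite.subset (Set.finite_range (fun i => α * ev i * (2 - α * ev i)))
    rintro x ⟨i, _, rfl⟩
    exact ⟨i, rfl⟩
  have hSne : S.Nonempty := by
    obtain ⟨i, hi⟩ := hexists
    exact ⟨_, i, hi, rfl⟩
  have hSpos : ∀ x ∈ S, 0 < x := by
    rintro x ⟨i, hi, rfl⟩
    have h1 : 0 < ev i := lt_of_le_of_ne (hev0 i) (Ne.symm hi)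
    have h2 : α * ev i ≤ α * ‖A‖ := by
      apply mul_le_mul_of_nonneg_left (hev_le i) hα.le
    have : α * ev i < 2 := lt_of_le_of_lt h2 hαA
    have : 0 < α * ev i := mul_pos hα h1
    nlinarith
  have hβpos : 0 < β := by
    rw [hβ]
    exact hSpos _ (hSne.csInf_mem hSfin)
  have hβle : ∀ i, ev i ≠ 0 → β ≤ α * ev i * (2 - α * ev i) := by
    intro i hi
    rw [hβ]
    exact csInf_le hSfin.bddBelow ⟨i, hi, rfl⟩
  -- spectral estimate
  have key : ∀ x : EuclideanSpace ℝ (Fin ℓ), (∀ i, ev i = 0 → B.repr x i = 0) →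
      ‖x - α • A x‖ ^ 2 ≤ (1 - β) * ‖x‖ ^ 2 := by
    intro x hx
    rw [hnorm, hnorm, Finset.mul_sum]
    apply Finset.sum_le_sum
    intro i _
    have hco : B.repr (x - α • A x) i = (1 - α * ev i) * B.repr x i := by
      rw [map_sub, map_smul]
      simp only [PiLp.sub_apply, PiLp.smul_apply, smul_eq_mul]
      rw [hcoordA]
      ring
    rw [hco]
    by_cases hev : ev i = 0
    · rw [hx i hev]; ring_nf; simp
    · have h1 : β ≤ α * ev i * (2 - α * ev i) := hβle i hev
      have h2 : (1 - α * ev i) ^ 2 ≤ 1 - β := by nlinarith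
      have := sq_nonneg (B.repr x i)
      calc ((1 - α * ev i) * B.repr x i) ^ 2 = (1 - α * ev i) ^ 2 * (B.repr x i) ^ 2 := by ring
        _ ≤ (1 - β) * (B.repr x i) ^ 2 := by nlinarith
  -- coordinates of v vanish on kernel
  have hvcoord : ∀ k i, ev i = 0 → B.repr (v k) i = 0 := by
    intro k i hi
    obtain ⟨w, hw⟩ := hv k
    rw [hw, hcoordA, hi, zero_mul]
  -- main descent inequality
  have hmain : ∀ k, ‖c (k + 1) - cstar‖ ^ 2 ≤ ‖c k - cstar‖ ^ 2 - β * ‖v k‖ ^ 2 := by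
    intro k
    have h1 : ‖c (k + 1) - cstar‖ ≤ ‖(c k - cstar) - α • A (c k - cstar)‖ := by
      calc ‖c (k + 1) - cstar‖
          = ‖J (α • A cstar - cstar) - J (α • A (c k) - c k)‖ := by
            conv_lhs => rw [hc k, hcstar]
            rw [neg_sub_neg]
        _ ≤ ‖(α • A cstar - cstar) - (α • A (c k) - c k)‖ := hJne _ _
        _ = ‖(c k - cstar) - α • A (c k - cstar)‖ := by
            rw [map_sub]
            congr 1
            module
    have horth2 : ⟪u k, v k - α • A (v k)⟫ = 0 := by
      rw [inner_sub_right, horth k, real_inner_smul_right, ← hsymm, hu k, inner_zero_left]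
      ring
    have hr : (c k - cstar) - α • A (c k - cstar) = u k + (v k - α • A (v k)) := by
      rw [hdec k, map_add, hu k]
      module
    have hrsq : ‖(c k - cstar) - α • A (c k - cstar)‖ ^ 2
        = ‖u k‖ ^ 2 + ‖v k - α • A (v k)‖ ^ 2 := by
      rw [hr, norm_add_sq_real, horth2]
      ring
    have hrsq2 : ‖c k - cstar‖ ^ 2 = ‖u k‖ ^ 2 + ‖v k‖ ^ 2 := by
      rw [hdec k, norm_add_sq_real, horth k]
      ring
    have hkey := key (v k) (hvcoord k)
    have h2 : ‖c (k + 1) - cstar‖ ^ 2 ≤ ‖(c k - cstar) - α • A (c k - cstar)‖ ^ 2 :=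
      pow_le_pow_left₀ (norm_nonneg _) h1 2
    rw [hrsq] at h2
    rw [hrsq2]
    nlinarith
  refine ⟨hβpos, hmain, ?_, ?_⟩
  -- convergence of ‖v k‖
  · have hvn : Filter.Tendsto (fun k => ‖v k‖ ^ 2) Filter.atTop (nhds 0) :=
      aux_tendsto_real (a := fun k => ‖c k - cstar‖ ^ 2) (w := fun k => ‖v k‖ ^ 2) hβpos
        (fun k => sq_nonneg _) (fun k => sq_nonneg _) hmain
    have := (Real.continuous_sqrt.tendsto 0).comp hvn
    simp only [Real.sqrt_zero] at this
    apply this.congr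
    intro k
    exact Real.sqrt_sq (norm_nonneg _)
  -- convergence of K r^k
  · have hvn : Filter.Tendsto (fun k => ‖v k‖) Filter.atTop (nhds 0) := by
      have hvn2 : Filter.Tendsto (fun k => ‖v k‖ ^ 2) Filter.atTop (nhds 0) :=
        aux_tendsto_real (a := fun k => ‖c k - cstar‖ ^ 2) (w := fun k => ‖v k‖ ^ 2) hβpos
          (fun k => sq_nonneg _) (fun k => sq_nonneg _) hmain
      have := (Real.continuous_sqrt.tendsto 0).comp hvn2
      simp only [Real.sqrt_zero] at this
      apply this.congr
      intro k
      exact Real.sqrt_sq (norm_nonneg _)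
    have hAv : ∀ k, A (c k - cstar) = A (v k) := by
      intro k
      rw [hdec k, map_add, hu k, zero_add]
    have h3 : Filter.Tendsto (fun k => ‖A‖ * ‖v k‖) Filter.atTop (nhds (‖A‖ * 0)) :=
      hvn.const_mul ‖A‖
    rw [mul_zero] at h3
    exact squeeze_zero_norm (a := fun k => ‖A‖ * ‖v k‖)
      (fun k => by rw [hAv k]; exact A.le_opNorm _) h3
end

section
/- Under the hypotheses of the fixed-point iteration c^{k+1} = −J_α(αKc^k − c^k) with 0 < α < 2/‖K‖₂, K nonzero symmetric positive semidefinite, and c* a fixed point: the sequence c^k is bounded, F(c^k) → min F, and every cluster point of (c^k) is a minimizer of F(c) = f(Kc) + (1/2)cᵀKc. -/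
open scoped RealInnerProductSpace

set_option maxHeartbeats 2000000 in
/-- for the fixed-point iteration `c^{k+1} = −J_α(αKc^k − c^k)` with
`0 < α < 2/‖K‖₂`, `K` nonzero symmetric positive semidefinite and `c*` a fixed
point: the sequence is bounded, `F(c^k) → min F`, and every cluster point of
`(c^k)` minimizes `F(c) = f(Kc) + (1/2) cᵀKc`. -/
theorem stmt_10 {ℓ : ℕ} (K : Matrix (Fin ℓ) (Fin ℓ) ℝ) (hK : K.PosSemidef) (hK0 : K ≠ 0)
    (f : EuclideanSpace ℝ (Fin ℓ) → ℝ) (hf : ConvexOn ℝ Set.univ f)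
    (hbdd : BddBelow (Set.range f))
    (α : ℝ) (hα : 0 < α) (hα2 : α < 2 / ‖Matrix.toEuclideanCLM (𝕜 := ℝ) (n := Fin ℓ) K‖)
    (J : EuclideanSpace ℝ (Fin ℓ) → EuclideanSpace ℝ (Fin ℓ))
    (hJne : ∀ v w, ‖J v - J w‖ ≤ ‖v - w‖)
    (hJ : ∀ v, ∃ z, J v ∈ subdiffE f z ∧ v = J v + α • z)
    (cstar : EuclideanSpace ℝ (Fin ℓ))
    (hcstar : cstar = -J (α • Matrix.toEuclideanCLM (𝕜 := ℝ) (n := Fin ℓ) K cstar - cstar))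
    (c : ℕ → EuclideanSpace ℝ (Fin ℓ))
    (hc : ∀ k, c (k + 1) =
      -J (α • Matrix.toEuclideanCLM (𝕜 := ℝ) (n := Fin ℓ) K (c k) - c k))
    (F : EuclideanSpace ℝ (Fin ℓ) → ℝ)
    (hF : ∀ x, F x = f (Matrix.toEuclideanCLM (𝕜 := ℝ) (n := Fin ℓ) K x) +
      (1 / 2) * ⟪x, Matrix.toEuclideanCLM (𝕜 := ℝ) (n := Fin ℓ) K x⟫) :
    (∃ M : ℝ, ∀ k, ‖c k‖ ≤ M) ∧
      Filter.Tendsto (fun k => F (c k)) Filter.atTop (nhds (sInf (Set.range F))) ∧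
      ∀ p, MapClusterPt p Filter.atTop c → ∀ c', F p ≤ F c' := by
  set A := Matrix.toEuclideanCLM (𝕜 := ℝ) (n := Fin ℓ) K with hA
  -- symmetry of A
  have hsym : ∀ x y : EuclideanSpace ℝ (Fin ℓ), ⟪A x, y⟫ = ⟪x, A y⟫ := by
    have h := Matrix.isHermitian_iff_isSymmetric.mp hK.1
    intro x y
    have hx : A x = Matrix.toEuclideanLin K x := by
      rw [← Matrix.coe_toEuclideanCLM_eq_toEuclideanLin]; rfl
    have hy : A y = Matrix.toEuclideanLin K y := by
      rw [← Matrix.coe_toEuclideanCLM_eq_toEuclideanLin]; rfl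
    rw [hx, hy]; exact h x y
  -- positivity of A
  have hpos : ∀ x : EuclideanSpace ℝ (Fin ℓ), 0 ≤ ⟪x, A x⟫ := by
    intro x
    have : ⟪x, A x⟫ =
        dotProduct (star (WithLp.equiv 2 _ x)) (K.mulVec (WithLp.equiv 2 _ x)) := by
      rw [EuclideanSpace.inner_eq_star_dotProduct, Matrix.ofLp_toEuclideanCLM,
        dotProduct_comm]; rfl
    rw [this]
    exact hK.dotProduct_mulVec_nonneg _
  have hA0 : (0:ℝ) < ‖A‖ := by
    have hAne : A ≠ 0 := by
      intro h
      apply hK0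
      have h2 : Matrix.toEuclideanCLM (𝕜 := ℝ) (n := Fin ℓ) K =
          Matrix.toEuclideanCLM (𝕜 := ℝ) (n := Fin ℓ) 0 := by
        rw [map_zero]; exact h
      exact EquivLike.injective _ h2
    exact norm_pos_iff.mpr hAne
  have hαA : α * ‖A‖ < 2 := by
    have := (lt_div_iff₀ hA0).mp hα2
    linarith
  set δ : ℝ := α * (2 - α * ‖A‖) with hδdef
  have hδ : 0 < δ := by
    apply mul_pos hα; linarith
  -- Cauchy-Schwarz for the PSD form
  have key : ∀ x : EuclideanSpace ℝ (Fin ℓ), ‖A x‖ ^ 2 ≤ ‖A‖ * ⟪x, A x⟫ := by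
    intro x
    have hform : ∀ t : ℝ,
        0 ≤ ⟪x, A x⟫ * (t * t) + (2 * ⟪A x, A x⟫) * t + ⟪A x, A (A x)⟫ := by
      intro t
      have h0 := hpos (t • x + A x)
      have hexp : ⟪t • x + A x, A (t • x + A x)⟫ =
          ⟪x, A x⟫ * (t * t) + (2 * ⟪A x, A x⟫) * t + ⟪A x, A (A x)⟫ := by
        rw [map_add, map_smul]
        rw [inner_add_left, inner_add_right, inner_add_right]
        rw [real_inner_smul_left, real_inner_smul_left, real_inner_smul_right,
          real_inner_smul_right]
        have h1 : ⟪x, A (A x)⟫ = ⟪A x, A x⟫ := (hsym x (A x)).symm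
        rw [h1]
        have h2 : ⟪A x, A x⟫ = ⟪A x, A x⟫ := rfl
        ring
      rw [← hexp]; exact h0
    have hd := discrim_le_zero hform
    rw [discrim] at hd
    have h3 : ⟪A x, A (A x)⟫ ≤ ‖A‖ * ‖A x‖ ^ 2 := by
      calc ⟪A x, A (A x)⟫ ≤ ‖A x‖ * ‖A (A x)‖ := real_inner_le_norm _ _
        _ ≤ ‖A x‖ * (‖A‖ * ‖A x‖) := by
            apply mul_le_mul_of_nonneg_left (A.le_opNorm _) (norm_nonneg _)
        _ = ‖A‖ * ‖A x‖ ^ 2 := by ring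
    have h4 : ⟪A x, A x⟫ = ‖A x‖ ^ 2 := real_inner_self_eq_norm_sq _
    rw [h4] at hd
    rcases eq_or_ne (‖A x‖) 0 with h | h
    · rw [h]; nlinarith [mul_nonneg hA0.le (hpos x)]
    · have h5 : 0 < ‖A x‖ ^ 2 := by positivity
      nlinarith [hpos x, h5, hd, h3]
  -- the residual sequence
  set r : ℕ → EuclideanSpace ℝ (Fin ℓ) := fun k => c k - cstar with hrdef
  set q : ℕ → ℝ := fun k => ⟪r k, A (r k)⟫ with hqdef
  have hq0 : ∀ k, 0 ≤ q k := fun k => hpos _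
  -- main decrease estimate
  have hdec : ∀ k, ‖r (k + 1)‖ ^ 2 ≤ ‖r k‖ ^ 2 - δ * q k := by
    intro k
    have hstep : ‖r (k + 1)‖ ≤ ‖α • A (r k) - r k‖ := by
      have hre : r (k + 1) = J (α • A cstar - cstar) - J (α • A (c k) - c k) := by
        show c (k + 1) - cstar = _
        rw [hc k]
        conv_lhs => rw [hcstar]
        abel
      have harg : (α • A cstar - cstar) - (α • A (c k) - c k) = -(α • A (r k) - r k) := by
        have hAr : A (r k) = A (c k) - A cstar := by
          show A (c k - cstar) = _
          rw [map_sub]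
        rw [hAr, smul_sub]
        show _ = -(((α • A (c k)) - α • A cstar) - (c k - cstar))
        abel
      calc ‖r (k + 1)‖ = ‖J (α • A cstar - cstar) - J (α • A (c k) - c k)‖ := by rw [hre]
        _ ≤ ‖(α • A cstar - cstar) - (α • A (c k) - c k)‖ := hJne _ _
        _ = ‖α • A (r k) - r k‖ := by rw [harg, norm_neg]
    have hsq : ‖α • A (r k) - r k‖ ^ 2 =
        α ^ 2 * ‖A (r k)‖ ^ 2 - 2 * α * q k + ‖r k‖ ^ 2 := by
      rw [norm_sub_sq_real, norm_smul, real_inner_smul_left]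
      have : ⟪A (r k), r k⟫ = q k := by rw [hqdef]; exact hsym (r k) (r k)
      rw [this]
      simp [abs_of_pos hα]
      ring
    have h1 : ‖r (k + 1)‖ ^ 2 ≤ ‖α • A (r k) - r k‖ ^ 2 := by
      apply pow_le_pow_left₀ (norm_nonneg _) hstep
    have h2 := key (r k)
    rw [hsq] at h1
    have hq := hq0 k
    nlinarith [h1, h2, hq, sq_nonneg α, hα.le]
  have hmono : ∀ k, ‖r (k + 1)‖ ≤ ‖r k‖ := by
    intro k
    have := hdec k
    have h2 : δ * q k ≥ 0 := mul_nonneg hδ.le (hq0 k)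
    nlinarith [norm_nonneg (r (k+1)), norm_nonneg (r k)]
  have hbound : ∀ k, ‖r k‖ ≤ ‖r 0‖ := by
    intro k
    induction k with
    | zero => exact le_refl _
    | succ n ih => exact (hmono n).trans ih
  -- boundedness
  have hMbound : ∀ k, ‖c k‖ ≤ ‖r 0‖ + ‖cstar‖ := by
    intro k
    calc ‖c k‖ = ‖r k + cstar‖ := by simp [hrdef]
      _ ≤ ‖r k‖ + ‖cstar‖ := norm_add_le _ _
      _ ≤ ‖r 0‖ + ‖cstar‖ := by linarith [hbound k]
  -- summability of q
  have hsum : ∀ n, δ * ∑ i ∈ Finset.range n, q i ≤ ‖r 0‖ ^ 2 - ‖r n‖ ^ 2 := by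
    intro n
    induction n with
    | zero => simp
    | succ m ih =>
      rw [Finset.sum_range_succ, mul_add]
      have := hdec m
      linarith
  have hqsummable : Summable q := by
    apply summable_of_sum_range_le hq0 (c := ‖r 0‖ ^ 2 / δ)
    intro n
    rw [le_div_iff₀ hδ]
    have := hsum n
    nlinarith [sq_nonneg (‖r n‖)]
  have hqto0 : Filter.Tendsto q Filter.atTop (nhds 0) := hqsummable.tendsto_atTop_zero
  -- A (r k) → 0
  have hArto0 : Filter.Tendsto (fun k => A (r k)) Filter.atTop (nhds 0) := by
    rw [tendsto_zero_iff_norm_tendsto_zero]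
    have hb : ∀ k, ‖A (r k)‖ ≤ Real.sqrt (‖A‖ * q k) := by
      intro k
      rw [Real.le_sqrt (norm_nonneg _) (mul_nonneg hA0.le (hq0 k))]
      exact key (r k)
    have hsqrt : Filter.Tendsto (fun k => Real.sqrt (‖A‖ * q k)) Filter.atTop (nhds 0) := by
      have : Filter.Tendsto (fun k => ‖A‖ * q k) Filter.atTop (nhds (‖A‖ * 0)) :=
        hqto0.const_mul _
      rw [mul_zero] at this
      have h2 := (Real.continuous_sqrt.tendsto 0).comp this
      rw [Real.sqrt_zero] at h2
      exact h2
    exact squeeze_zero (fun k => norm_nonneg _) hb hsqrt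
  -- c* is a minimizer
  have hsub : ∀ y, ⟪-cstar, y - A cstar⟫ ≤ f y - f (A cstar) := by
    obtain ⟨z, hz1, hz2⟩ := hJ (α • A cstar - cstar)
    have hJv : J (α • A cstar - cstar) = -cstar := by
      conv_rhs => rw [hcstar]
      rw [neg_neg]
    rw [hJv] at hz1 hz2
    have hzeq : z = A cstar := by
      have h2 : α • z = α • A cstar := by
        have h3 := hz2
        rw [sub_eq_iff_eq_add] at h3
        rw [h3]; abel
      exact smul_right_injective _ hα.ne' h2
    rw [hzeq] at hz1
    exact hz1
  have hmin : ∀ c', F cstar ≤ F c' := by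
    intro c'
    have h1 := hsub (A c')
    rw [hF c', hF cstar]
    have hexp : ⟪c' - cstar, A (c' - cstar)⟫ =
        ⟪c', A c'⟫ - ⟪cstar, A c'⟫ - ⟪c', A cstar⟫ + ⟪cstar, A cstar⟫ := by
      rw [map_sub, inner_sub_left, inner_sub_right, inner_sub_right]
      ring
    have hcross : ⟪c', A cstar⟫ = ⟪cstar, A c'⟫ := by
      rw [real_inner_comm]
      exact hsym cstar c'
    have hp := hpos (c' - cstar)
    rw [hexp, hcross] at hp
    have h2 : ⟪-cstar, A c' - A cstar⟫ =
        -⟪cstar, A c'⟫ + ⟪cstar, A cstar⟫ := by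
      rw [inner_neg_left, inner_sub_right]
      ring
    rw [h2] at h1
    linarith
  -- F cstar = sInf (range F)
  have hinf : sInf (Set.range F) = F cstar := by
    have hle : IsLeast (Set.range F) (F cstar) := by
      constructor
      · exact ⟨cstar, rfl⟩
      · rintro y ⟨c', rfl⟩; exact hmin c'
    exact hle.csInf_eq
  -- continuity of f
  have hfc : Continuous f := by
    rw [← continuousOn_univ]
    exact hf.continuousOn isOpen_univ
  -- A (c k) → A cstar
  have hAc : Filter.Tendsto (fun k => A (c k)) Filter.atTop (nhds (A cstar)) := by
    have heq : ∀ k, A (c k) = A cstar + A (r k) := by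
      intro k; rw [hrdef]; simp [map_sub]
    simp only [heq]
    have := (tendsto_const_nhds (x := A cstar) (f := Filter.atTop (α := ℕ))).add hArto0
    simpa using this
  -- F (c k) → F cstar
  have hFtend : Filter.Tendsto (fun k => F (c k)) Filter.atTop (nhds (F cstar)) := by
    have hfterm : Filter.Tendsto (fun k => f (A (c k))) Filter.atTop (nhds (f (A cstar))) :=
      ((hfc.tendsto _).comp hAc)
    have hqterm : Filter.Tendsto (fun k => ⟪c k, A (c k)⟫) Filter.atTop
        (nhds (⟪cstar, A cstar⟫)) := by
      have heq : ∀ k, ⟪c k, A (c k)⟫ =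
          ⟪cstar, A cstar⟫ + 2 * ⟪cstar, A (r k)⟫ + q k := by
        intro k
        have hck : c k = cstar + r k := by
          show c k = cstar + (c k - cstar); abel
        calc ⟪c k, A (c k)⟫ = ⟪cstar + r k, A (cstar + r k)⟫ := by rw [← hck]
          _ = ⟪cstar, A cstar⟫ + ⟪cstar, A (r k)⟫ + ⟪r k, A cstar⟫ + q k := by
              rw [map_add, inner_add_left, inner_add_right, inner_add_right]; ring
          _ = ⟪cstar, A cstar⟫ + 2 * ⟪cstar, A (r k)⟫ + q k := by
              have : ⟪r k, A cstar⟫ = ⟪cstar, A (r k)⟫ := by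
                rw [← hsym (r k) cstar, real_inner_comm]
              rw [this]; ring
      simp only [heq]
      have hterm2 : Filter.Tendsto (fun k => ⟪cstar, A (r k)⟫) Filter.atTop (nhds 0) := by
        have := Filter.Tendsto.inner (𝕜 := ℝ) (tendsto_const_nhds (x := cstar)
          (f := Filter.atTop (α := ℕ))) hArto0
        simpa using this
      have := ((tendsto_const_nhds (x := ⟪cstar, A cstar⟫)
        (f := Filter.atTop (α := ℕ))).add (hterm2.const_mul 2)).add hqto0
      simpa using this
    simp only [hF]
    have := hfterm.add (hqterm.const_mul (1/2 : ℝ))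
    simpa [mul_comm] using this
  refine ⟨⟨‖r 0‖ + ‖cstar‖, hMbound⟩, ?_, ?_⟩
  · rw [hinf]; exact hFtend
  · intro p hp c'
    have hApA : A p = A cstar := by
      have hcl : MapClusterPt (A p) Filter.atTop (fun k => A (c k)) :=
        hp.continuousAt_comp (A.continuous.continuousAt)
      have hne : (nhds (A p) ⊓ Filter.map (fun k => A (c k)) Filter.atTop).NeBot := hcl
      have hle : Filter.map (fun k => A (c k)) Filter.atTop ≤ nhds (A cstar) := hAc
      have : (nhds (A p) ⊓ nhds (A cstar)).NeBot :=
        hne.mono (inf_le_inf_left _ hle)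
      exact eq_of_nhds_neBot this
    have hFp : F p = F cstar := by
      rw [hF p, hF cstar, hApA]
      congr 1
      have : ⟪p, A cstar⟫ = ⟪cstar, A cstar⟫ := by
        have h1 : ⟪p, A cstar⟫ = ⟪A p, cstar⟫ := (hsym p cstar).symm
        rw [h1, hApA, real_inner_comm]
      rw [this]
    rw [hFp]
    exact hmin c'
end

section
/- Let f : ℝ^ℓ → ℝ be convex with f(z) = Σᵢ fᵢ(zᵢ) for convex fᵢ : ℝ → ℝ, and K symmetric positive semidefinite with columns kᵢ. Then there exists a minimizer c of F(c) = f(Kc) + (1/2)cᵀKc such that, for every i and every αᵢ > 0, cᵢ = −J^i_{αᵢ}(αᵢ kᵢᵀc − cᵢ), where J^i_{αᵢ} = (I + αᵢ(∂fᵢ)^{-1})^{-1}. -/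
open scoped Matrix

/-- Subdifferential of a finite-valued function on `ℝ`. -/
def subdiff1 (f : ℝ → ℝ) (x : ℝ) : Set ℝ :=
  {ξ | ∀ y, ξ * (y - x) ≤ f y - f x}

open Matrix

noncomputable def leftD (φ : ℝ → ℝ) (x : ℝ) : ℝ :=
  sSup ((fun y => (φ y - φ x) / (y - x)) '' Set.Iio x)

noncomputable def rightD (φ : ℝ → ℝ) (x : ℝ) : ℝ :=
  sInf ((fun y => (φ y - φ x) / (y - x)) '' Set.Ioi x)

section onedim

variable {φ : ℝ → ℝ}

lemma sl_le_sl (hφ : ConvexOn ℝ Set.univ φ) (x : ℝ) {y z : ℝ}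
    (hy : y ≠ x) (hz : z ≠ x) (hyz : y ≤ z) :
    (φ y - φ x) / (y - x) ≤ (φ z - φ x) / (z - x) :=
  hφ.secant_mono (Set.mem_univ _) (Set.mem_univ _) (Set.mem_univ _) hy hz hyz

lemma left_nonempty (φ : ℝ → ℝ) (x : ℝ) :
    ((fun y => (φ y - φ x) / (y - x)) '' Set.Iio x).Nonempty :=
  ⟨_, ⟨x - 1, by norm_num, rfl⟩⟩

lemma right_nonempty (φ : ℝ → ℝ) (x : ℝ) :
    ((fun y => (φ y - φ x) / (y - x)) '' Set.Ioi x).Nonempty :=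
  ⟨_, ⟨x + 1, by norm_num, rfl⟩⟩

lemma left_bddAbove (hφ : ConvexOn ℝ Set.univ φ) (x : ℝ) :
    BddAbove ((fun y => (φ y - φ x) / (y - x)) '' Set.Iio x) := by
  refine ⟨(φ (x + 1) - φ x) / (x + 1 - x), ?_⟩
  rintro r ⟨y, hy, rfl⟩
  simp only [Set.mem_Iio] at hy
  exact sl_le_sl hφ x (ne_of_lt hy) (by norm_num) (by linarith)

lemma right_bddBelow (hφ : ConvexOn ℝ Set.univ φ) (x : ℝ) :
    BddBelow ((fun y => (φ y - φ x) / (y - x)) '' Set.Ioi x) := by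
  refine ⟨(φ (x - 1) - φ x) / (x - 1 - x), ?_⟩
  rintro r ⟨y, hy, rfl⟩
  simp only [Set.mem_Ioi] at hy
  exact sl_le_sl hφ x (by norm_num) (ne_of_gt hy) (by linarith)

lemma sl_le_leftD (hφ : ConvexOn ℝ Set.univ φ) (x : ℝ) {y : ℝ} (hy : y < x) :
    (φ y - φ x) / (y - x) ≤ leftD φ x :=
  le_csSup (left_bddAbove hφ x) ⟨y, hy, rfl⟩

lemma leftD_le_sl (hφ : ConvexOn ℝ Set.univ φ) (x : ℝ) {z : ℝ} (hz : x < z) :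
    leftD φ x ≤ (φ z - φ x) / (z - x) := by
  refine csSup_le (left_nonempty φ x) ?_
  rintro r ⟨y, hy, rfl⟩
  simp only [Set.mem_Iio] at hy
  exact sl_le_sl hφ x (ne_of_lt hy) (ne_of_gt hz) (by linarith)

lemma rightD_le_sl (hφ : ConvexOn ℝ Set.univ φ) (x : ℝ) {z : ℝ} (hz : x < z) :
    rightD φ x ≤ (φ z - φ x) / (z - x) :=
  csInf_le (right_bddBelow hφ x) ⟨z, hz, rfl⟩

lemma sl_le_rightD (hφ : ConvexOn ℝ Set.univ φ) (x : ℝ) {y : ℝ} (hy : y < x) :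
    (φ y - φ x) / (y - x) ≤ rightD φ x := by
  refine le_csInf (right_nonempty φ x) ?_
  rintro r ⟨z, hz, rfl⟩
  simp only [Set.mem_Ioi] at hz
  exact sl_le_sl hφ x (ne_of_lt hy) (ne_of_gt hz) (by linarith)

lemma leftD_le_rightD (hφ : ConvexOn ℝ Set.univ φ) (x : ℝ) : leftD φ x ≤ rightD φ x := by
  refine csSup_le (left_nonempty φ x) ?_
  rintro r ⟨y, hy, rfl⟩
  simp only [Set.mem_Iio] at hy
  exact sl_le_rightD hφ x hy

lemma mem_subdiff1_of_between (hφ : ConvexOn ℝ Set.univ φ) (x : ℝ) {ξ : ℝ}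
    (h1 : leftD φ x ≤ ξ) (h2 : ξ ≤ rightD φ x) :
    ξ ∈ subdiff1 φ x := by
  intro y
  rcases lt_trichotomy y x with hy | rfl | hy
  · have h3 : (φ y - φ x) / (y - x) ≤ ξ := le_trans (le_trans (sl_le_leftD hφ x hy) h1) (le_refl _)
    have hyx : y - x < 0 := by linarith
    calc ξ * (y - x) ≤ (φ y - φ x) / (y - x) * (y - x) :=
          mul_le_mul_of_nonpos_right h3 (le_of_lt hyx)
      _ = φ y - φ x := div_mul_cancel₀ _ (by linarith)
  · simp
  · have h3 : ξ ≤ (φ y - φ x) / (y - x) := le_trans h2 (rightD_le_sl hφ x hy)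
    have hyx : 0 < y - x := by linarith
    calc ξ * (y - x) ≤ (φ y - φ x) / (y - x) * (y - x) :=
          mul_le_mul_of_nonneg_right h3 (le_of_lt hyx)
      _ = φ y - φ x := div_mul_cancel₀ _ (by linarith)


/-- the one-sided slope value used below -/
noncomputable def dirD (φ : ℝ → ℝ) (x w : ℝ) : ℝ :=
  if 0 < w then w * rightD φ x else w * leftD φ x

lemma slope_reparam {φ : ℝ → ℝ} (x : ℝ) {w t : ℝ} (hw : w ≠ 0) (ht : t ≠ 0) :
    (φ (x + t * w) - φ x) / t = w * ((φ (x + t * w) - φ x) / (x + t * w - x)) := by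
  rw [show x + t * w - x = t * w by ring]
  field_simp

lemma exists_slope_le {φ : ℝ → ℝ} (hφ : ConvexOn ℝ Set.univ φ) (x w : ℝ) {ε : ℝ} (hε : 0 < ε) :
    ∃ t > 0, (φ (x + t * w) - φ x) / t ≤ dirD φ x w + ε := by
  rcases lt_trichotomy w 0 with hw | rfl | hw
  · -- w < 0 : use leftD = sSup
    have hw' : 0 < -w := by linarith
    obtain ⟨r, ⟨y, hy, rfl⟩, hr⟩ := Real.add_neg_lt_sSup (left_nonempty φ x)
      (show -(ε / (-w)) < 0 by rw [neg_neg_iff_pos]; positivity)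
    simp only [Set.mem_Iio] at hy
    have hwne : w ≠ 0 := ne_of_lt hw
    have htpos : 0 < (y - x) / w := div_pos_iff.mpr (Or.inr ⟨by linarith, hw⟩)
    refine ⟨(y - x) / w, htpos, ?_⟩
    have htne : (y - x) / w ≠ 0 := ne_of_gt htpos
    have ht : (y - x) / w * w = y - x := div_mul_cancel₀ _ hwne
    rw [slope_reparam x (ne_of_lt hw) htne, ht, show x + (y - x) = y by ring]
    rw [dirD, if_neg (by linarith)]
    have h2 : leftD φ x + -(ε / (-w)) < (φ y - φ x) / (y - x) := hr
    have := mul_le_mul_of_nonpos_left (le_of_lt h2) (le_of_lt hw)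
    calc w * ((φ y - φ x) / (y - x)) ≤ w * (leftD φ x + -(ε / (-w))) := this
      _ = w * leftD φ x + ε := by field_simp
  · refine ⟨1, one_pos, ?_⟩
    rw [dirD, if_neg (lt_irrefl 0)]
    simp
    linarith
  · -- w > 0 : use rightD = sInf
    obtain ⟨r, ⟨y, hy, rfl⟩, hr⟩ := Real.lt_sInf_add_pos (right_nonempty φ x)
      (show 0 < ε / w by positivity)
    simp only [Set.mem_Ioi] at hy
    have hwne : w ≠ 0 := ne_of_gt hw
    have htpos : 0 < (y - x) / w := div_pos (by linarith) hw
    refine ⟨(y - x) / w, htpos, ?_⟩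
    have htne : (y - x) / w ≠ 0 := ne_of_gt htpos
    have ht : (y - x) / w * w = y - x := div_mul_cancel₀ _ hwne
    rw [slope_reparam x (ne_of_gt hw) htne, ht, show x + (y - x) = y by ring]
    rw [dirD, if_pos hw]
    have := mul_le_mul_of_nonneg_left (le_of_lt hr) (le_of_lt hw)
    calc w * ((φ y - φ x) / (y - x)) ≤ w * (rightD φ x + ε / w) := this
      _ = w * rightD φ x + ε := by field_simp

lemma dirD_le (hφ : ConvexOn ℝ Set.univ φ) (x w : ℝ) {t : ℝ} (ht : 0 < t) :
    dirD φ x w ≤ (φ (x + t * w) - φ x) / t := by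
  rcases lt_trichotomy w 0 with hw | rfl | hw
  · rw [dirD, if_neg (by linarith), slope_reparam x (ne_of_lt hw) (ne_of_gt ht)]
    have hlt : x + t * w < x := by nlinarith
    have := sl_le_leftD hφ x hlt
    exact mul_le_mul_of_nonpos_left this (le_of_lt hw)
  · rw [dirD, if_neg (lt_irrefl 0)]
    simp
  · rw [dirD, if_pos hw, slope_reparam x (ne_of_gt hw) (ne_of_gt ht)]
    have hlt : x < x + t * w := by nlinarith
    have := rightD_le_sl hφ x hlt
    exact mul_le_mul_of_nonneg_left this (le_of_lt hw)

lemma slope_t_mono {φ : ℝ → ℝ} (hφ : ConvexOn ℝ Set.univ φ) (x w : ℝ) {s t : ℝ}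
    (hs : 0 < s) (hst : s ≤ t) :
    (φ (x + s * w) - φ x) / s ≤ (φ (x + t * w) - φ x) / t := by
  have ht : 0 < t := lt_of_lt_of_le hs hst
  rcases lt_trichotomy w 0 with hw | rfl | hw
  · rw [slope_reparam x (ne_of_lt hw) (ne_of_gt hs), slope_reparam x (ne_of_lt hw) (ne_of_gt ht)]
    have h1 : x + t * w ≠ x := by nlinarith
    have h2 : x + s * w ≠ x := by nlinarith
    have h3 : x + t * w ≤ x + s * w := by nlinarith
    exact mul_le_mul_of_nonpos_left (sl_le_sl hφ x h1 h2 h3) (le_of_lt hw)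
  · simp
  · rw [slope_reparam x (ne_of_gt hw) (ne_of_gt hs), slope_reparam x (ne_of_gt hw) (ne_of_gt ht)]
    have h1 : x + s * w ≠ x := by nlinarith
    have h2 : x + t * w ≠ x := by nlinarith
    have h3 : x + s * w ≤ x + t * w := by nlinarith
    exact mul_le_mul_of_nonneg_left (sl_le_sl hφ x h1 h2 h3) (le_of_lt hw)

end onedim

section matrixaux

variable {ℓ : ℕ}

lemma symm_dot {K : Matrix (Fin ℓ) (Fin ℓ) ℝ} (hsy : Kᵀ = K) (u v : Fin ℓ → ℝ) :
    u ⬝ᵥ K *ᵥ v = v ⬝ᵥ K *ᵥ u := by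
  rw [Matrix.dotProduct_mulVec, ← Matrix.mulVec_transpose, hsy, dotProduct_comm]

lemma transpose_of_posSemidef {K : Matrix (Fin ℓ) (Fin ℓ) ℝ} (hK : K.PosSemidef) : Kᵀ = K := by
  have := hK.1
  rwa [Matrix.IsHermitian, conjTranspose_eq_transpose_of_trivial] at this

/-- `K² x = 0 → K x = 0` for symmetric real `K`. -/
lemma mulVec_mulVec_eq_zero {K : Matrix (Fin ℓ) (Fin ℓ) ℝ} (hsy : Kᵀ = K) (x : Fin ℓ → ℝ)
    (h : K *ᵥ (K *ᵥ x) = 0) : K *ᵥ x = 0 := by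
  have h1 : (K *ᵥ x) ⬝ᵥ (K *ᵥ x) = x ⬝ᵥ (K *ᵥ (K *ᵥ x)) := by
    rw [Matrix.dotProduct_mulVec x, ← Matrix.mulVec_transpose, hsy]
  rw [h, dotProduct_zero] at h1
  exact dotProduct_self_eq_zero.mp h1

/-- range K = range K², hence any `K *ᵥ c` equals `K *ᵥ v` with `v ∈ range K`. -/
lemma exists_in_range {K : Matrix (Fin ℓ) (Fin ℓ) ℝ} (hsy : Kᵀ = K) (c : Fin ℓ → ℝ) :
    ∃ w : Fin ℓ → ℝ, K *ᵥ (K *ᵥ w) = K *ᵥ c := by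
  classical
  set L := Matrix.mulVecLin K with hL
  have hker : LinearMap.ker (L ∘ₗ L) = LinearMap.ker L := by
    apply le_antisymm
    · intro x hx
      simp only [LinearMap.mem_ker, LinearMap.comp_apply, hL, Matrix.mulVecLin_apply] at hx ⊢
      exact mulVec_mulVec_eq_zero hsy x hx
    · intro x hx
      simp only [LinearMap.mem_ker, hL, Matrix.mulVecLin_apply] at hx
      simp only [LinearMap.mem_ker, LinearMap.comp_apply, hL, Matrix.mulVecLin_apply, hx,
        Matrix.mulVec_zero]
  have hrange : LinearMap.range (L ∘ₗ L) = LinearMap.range L := by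
    have h1 := LinearMap.finrank_range_add_finrank_ker (L ∘ₗ L)
    have h2 := LinearMap.finrank_range_add_finrank_ker L
    rw [hker] at h1
    have hle : LinearMap.range (L ∘ₗ L) ≤ LinearMap.range L := by
      rintro y ⟨x, rfl⟩
      exact ⟨L x, rfl⟩
    exact Submodule.eq_of_le_of_finrank_le hle (by omega)
  have hmem : K *ᵥ c ∈ LinearMap.range (L ∘ₗ L) := by
    rw [hrange]; exact ⟨c, rfl⟩
  obtain ⟨w', hw'⟩ := hmem
  exact ⟨w', hw'⟩

/-- coercivity constant on the range of `K`. -/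
lemma exists_coercive {K : Matrix (Fin ℓ) (Fin ℓ) ℝ} (hK : K.PosSemidef) :
    ∃ lam > 0, ∀ w : Fin ℓ → ℝ, lam * ‖K *ᵥ w‖ ^ 2 ≤ (K *ᵥ w) ⬝ᵥ K *ᵥ (K *ᵥ w) := by
  classical
  have hsy := transpose_of_posSemidef hK
  set V : Set (Fin ℓ → ℝ) := (LinearMap.range (Matrix.mulVecLin K) : Set (Fin ℓ → ℝ)) with hV
  set S : Set (Fin ℓ → ℝ) := V ∩ Metric.sphere 0 1 with hS
  have hVclosed : IsClosed V := Submodule.closed_of_finiteDimensional _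
  have hScompact : IsCompact S := by
    apply (isCompact_sphere (0 : Fin ℓ → ℝ) 1).of_isClosed_subset
      (hVclosed.inter (Metric.isClosed_sphere))
    exact Set.inter_subset_right
  have hQcont : Continuous (fun v : Fin ℓ → ℝ => v ⬝ᵥ K *ᵥ v) :=
    (continuous_id.dotProduct ((continuous_const).matrix_mulVec continuous_id))
  -- key positivity on V ∩ sphere
  have hpos : ∀ v ∈ S, 0 < v ⬝ᵥ K *ᵥ v := by
    rintro v ⟨⟨w, rfl⟩, hv2⟩
    simp only [Matrix.mulVecLin_apply] at *
    rcases lt_or_eq_of_le (show 0 ≤ (K *ᵥ w) ⬝ᵥ K *ᵥ (K *ᵥ w) by simpa using hK.dotProduct_mulVec_nonneg (K *ᵥ w)) with h | h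
    · simpa using h
    · exfalso
      have h0 : (K *ᵥ w) ⬝ᵥ K *ᵥ (K *ᵥ w) = 0 := by
        have := h.symm
        simpa using this
      have hKz : K *ᵥ (K *ᵥ w) = 0 := by
        have := (hK.dotProduct_mulVec_zero_iff (K *ᵥ w)).mp (by simpa using h0)
        exact this
      have : K *ᵥ w = 0 := mulVec_mulVec_eq_zero hsy w hKz
      rw [mem_sphere_zero_iff_norm] at hv2
      rw [this] at hv2
      simp at hv2
  by_cases hne : S.Nonempty
  · obtain ⟨v₀, hv₀, hmin⟩ := hScompact.exists_isMinOn hne hQcont.continuousOn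
    refine ⟨v₀ ⬝ᵥ K *ᵥ v₀, hpos v₀ hv₀, ?_⟩
    intro w
    set v := K *ᵥ w with hv
    rcases eq_or_ne v 0 with h | h
    · simp [h]
    · have hnorm : ‖v‖ ≠ 0 := norm_ne_zero_iff.mpr h
      have hmem : (‖v‖⁻¹ • v) ∈ S := by
        constructor
        · exact Submodule.smul_mem _ _ ⟨w, rfl⟩
        · rw [mem_sphere_zero_iff_norm, norm_smul]
          simp [hnorm]
      have h1 : v₀ ⬝ᵥ K *ᵥ v₀ ≤ (‖v‖⁻¹ • v) ⬝ᵥ K *ᵥ (‖v‖⁻¹ • v) := hmin hmem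
      have hcalc : (‖v‖⁻¹ • v) ⬝ᵥ K *ᵥ (‖v‖⁻¹ • v) = ‖v‖⁻¹ * ‖v‖⁻¹ * (v ⬝ᵥ K *ᵥ v) := by
        rw [Matrix.mulVec_smul, dotProduct_smul, smul_dotProduct]
        simp [smul_smul]
        ring
      rw [hcalc] at h1
      have h2 : (v₀ ⬝ᵥ K *ᵥ v₀) * ‖v‖ ^ 2 ≤ ‖v‖⁻¹ * ‖v‖⁻¹ * (v ⬝ᵥ K *ᵥ v) * ‖v‖ ^ 2 :=
        mul_le_mul_of_nonneg_right h1 (by positivity)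
      calc (v₀ ⬝ᵥ K *ᵥ v₀) * ‖v‖ ^ 2 ≤ ‖v‖⁻¹ * ‖v‖⁻¹ * (v ⬝ᵥ K *ᵥ v) * ‖v‖ ^ 2 := h2
        _ = v ⬝ᵥ K *ᵥ v := by field_simp
  · refine ⟨1, one_pos, ?_⟩
    intro w
    rcases eq_or_ne (K *ᵥ w) 0 with h | h
    · simp [h]
    · exfalso
      apply hne
      have hnorm : ‖K *ᵥ w‖ ≠ 0 := norm_ne_zero_iff.mpr h
      exact ⟨‖K *ᵥ w‖⁻¹ • (K *ᵥ w), Submodule.smul_mem _ _ ⟨w, rfl⟩,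
        by rw [mem_sphere_zero_iff_norm, norm_smul]; simp [hnorm]⟩

end matrixaux

section minimizer
variable {ℓ : ℕ}

lemma exists_minimizer (K : Matrix (Fin ℓ) (Fin ℓ) ℝ) (hK : K.PosSemidef)
    (f : (Fin ℓ → ℝ) → ℝ) (hfc : Continuous f) (m : ℝ) (hm : ∀ z, m ≤ f z) :
    ∃ c₀ : Fin ℓ → ℝ, ∀ c' : Fin ℓ → ℝ,
      f (K *ᵥ c₀) + (1/2) * (c₀ ⬝ᵥ K *ᵥ c₀) ≤ f (K *ᵥ c') + (1/2) * (c' ⬝ᵥ K *ᵥ c') := by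
  classical
  have hsy := transpose_of_posSemidef hK
  set Φ : (Fin ℓ → ℝ) → ℝ := fun c => f (K *ᵥ c) + (1/2) * (c ⬝ᵥ K *ᵥ c) with hΦ
  have hΦcont : Continuous Φ := by
    apply Continuous.add
    · exact hfc.comp (continuous_const.matrix_mulVec continuous_id)
    · exact continuous_const.mul
        (continuous_id.dotProduct (continuous_const.matrix_mulVec continuous_id))
  have hval : ∀ v c : Fin ℓ → ℝ, K *ᵥ v = K *ᵥ c → Φ v = Φ c := by
    intro v c h
    have : v ⬝ᵥ K *ᵥ v = c ⬝ᵥ K *ᵥ c := by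
      calc v ⬝ᵥ K *ᵥ v = v ⬝ᵥ K *ᵥ c := by rw [h]
        _ = c ⬝ᵥ K *ᵥ v := symm_dot hsy v c
        _ = c ⬝ᵥ K *ᵥ c := by rw [h]
    simp only [hΦ]
    rw [this, h]
  obtain ⟨lam, hlam, hco⟩ := exists_coercive hK
  set V : Set (Fin ℓ → ℝ) := (LinearMap.range (Matrix.mulVecLin K) : Set (Fin ℓ → ℝ)) with hV
  have hVclosed : IsClosed V := Submodule.closed_of_finiteDimensional _
  set R : ℝ := Real.sqrt (max 0 (2 * (f 0 - m) / lam)) + 1 with hR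
  have hR0 : 0 < R := by positivity
  have hΦ0 : Φ 0 = f 0 := by simp [hΦ]
  -- values outside the ball are large
  have hout : ∀ v ∈ V, R < ‖v‖ → Φ 0 < Φ v := by
    rintro v ⟨w, rfl⟩ hv
    simp only [Matrix.mulVecLin_apply] at *
    have h1 : lam * ‖K *ᵥ w‖ ^ 2 ≤ (K *ᵥ w) ⬝ᵥ K *ᵥ (K *ᵥ w) := hco w
    have h2 : R ^ 2 < ‖K *ᵥ w‖ ^ 2 := by nlinarith [norm_nonneg (K *ᵥ w)]
    have h3 : 2 * (f 0 - m) / lam < R ^ 2 := by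
      have hs : Real.sqrt (max 0 (2 * (f 0 - m) / lam)) ^ 2 = max 0 (2 * (f 0 - m) / lam) :=
        Real.sq_sqrt (le_max_left _ _)
      have : 2 * (f 0 - m) / lam ≤ max 0 (2 * (f 0 - m) / lam) := le_max_right _ _
      nlinarith [Real.sqrt_nonneg (max 0 (2 * (f 0 - m) / lam))]
    have h4 : 2 * (f 0 - m) < lam * ‖K *ᵥ w‖ ^ 2 := by
      have := (div_lt_iff₀ hlam).mp (lt_trans h3 h2)
      linarith [this]
    have h5 : m ≤ f (K *ᵥ (K *ᵥ w)) := hm _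
    rw [hΦ0]
    show f 0 < f (K *ᵥ (K *ᵥ w)) + 1/2 * ((K *ᵥ w) ⬝ᵥ K *ᵥ (K *ᵥ w))
    nlinarith
  set C : Set (Fin ℓ → ℝ) := V ∩ Metric.closedBall 0 R with hC
  have hCcompact : IsCompact C :=
    (isCompact_closedBall (0 : Fin ℓ → ℝ) R).of_isClosed_subset
      (hVclosed.inter Metric.isClosed_closedBall) Set.inter_subset_right
  have h0C : (0 : Fin ℓ → ℝ) ∈ C :=
    ⟨Submodule.zero_mem _, by simp [Metric.mem_closedBall]; linarith⟩
  obtain ⟨c₀, hc₀C, hmin⟩ := hCcompact.exists_isMinOn ⟨0, h0C⟩ hΦcont.continuousOn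
  refine ⟨c₀, ?_⟩
  intro c'
  obtain ⟨w, hw⟩ := exists_in_range hsy c'
  have hvval : Φ (K *ᵥ w) = Φ c' := hval _ _ hw
  by_cases hball : ‖K *ᵥ w‖ ≤ R
  · have hmemC : (K *ᵥ w) ∈ C := ⟨⟨w, rfl⟩, by simpa [Metric.mem_closedBall] using hball⟩
    have := hmin hmemC
    calc Φ c₀ ≤ Φ (K *ᵥ w) := this
      _ = Φ c' := hvval
  · push_neg at hball
    have h1 : Φ 0 < Φ (K *ᵥ w) := hout _ ⟨w, rfl⟩ hball
    have h2 : Φ c₀ ≤ Φ 0 := hmin h0C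
    calc Φ c₀ ≤ Φ 0 := h2
      _ ≤ Φ (K *ᵥ w) := le_of_lt h1
      _ = Φ c' := hvval

end minimizer

lemma exists_subgradient {ℓ : ℕ} (hne : Nonempty (Fin ℓ))
    (K : Matrix (Fin ℓ) (Fin ℓ) ℝ) (hK : K.PosSemidef)
    (φ : Fin ℓ → ℝ → ℝ) (hφ : ∀ i, ConvexOn ℝ Set.univ (φ i))
    (f : (Fin ℓ → ℝ) → ℝ) (hf : ∀ z, f z = ∑ i, φ i (z i))
    (c₀ : Fin ℓ → ℝ)
    (hmin : ∀ c' : Fin ℓ → ℝ,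
      f (K *ᵥ c₀) + (1/2) * (c₀ ⬝ᵥ K *ᵥ c₀) ≤ f (K *ᵥ c') + (1/2) * (c' ⬝ᵥ K *ᵥ c')) :
    ∃ g : Fin ℓ → ℝ, (∀ i, g i ∈ subdiff1 (φ i) ((K *ᵥ c₀) i)) ∧ K *ᵥ g = -(K *ᵥ c₀) := by
  classical
  haveI := hne
  have hsy := transpose_of_posSemidef hK
  set z : Fin ℓ → ℝ := K *ᵥ c₀ with hz
  set a : Fin ℓ → ℝ := fun i => leftD (φ i) (z i) with ha
  set b : Fin ℓ → ℝ := fun i => rightD (φ i) (z i) with hb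
  have hab : ∀ i, a i ≤ b i := fun i => leftD_le_rightD (hφ i) (z i)
  set box : Set (Fin ℓ → ℝ) := Set.univ.pi (fun i => Set.Icc (a i) (b i)) with hbox
  set C' : Set (Fin ℓ → ℝ) := (Matrix.mulVecLin K) '' box with hC'
  have hboxconv : Convex ℝ box := convex_pi (fun i _ => convex_Icc _ _)
  have hboxcomp : IsCompact box := isCompact_univ_pi (fun i => isCompact_Icc)
  have hC'conv : Convex ℝ C' := hboxconv.linear_image (Matrix.mulVecLin K)
  have hC'closed : IsClosed C' :=
    (hboxcomp.image (Matrix.mulVecLin K).continuous_of_finiteDimensional).isClosed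
  -- main claim
  have hmem : -(K *ᵥ c₀) ∈ C' := by
    by_contra hcon
    obtain ⟨L, u, hLlt, hLgt⟩ := geometric_hahn_banach_closed_point hC'conv hC'closed hcon
    set d : Fin ℓ → ℝ := fun i => L (fun j => if i = j then 1 else 0) with hd
    have hLeq : ∀ y : Fin ℓ → ℝ, L y = y ⬝ᵥ d := by
      intro y
      have := LinearMap.pi_apply_eq_sum_univ (L : (Fin ℓ → ℝ) →ₗ[ℝ] ℝ) y
      simpa [dotProduct, smul_eq_mul, hd] using this
    set w : Fin ℓ → ℝ := K *ᵥ d with hw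
    set qd : ℝ := d ⬝ᵥ K *ᵥ d with hqd
    have hqd0 : 0 ≤ qd := by simpa using hK.dotProduct_mulVec_nonneg d
    -- the separating inequality in dot-product form
    have hsep : ∀ g ∈ box, g ⬝ᵥ w < -(c₀ ⬝ᵥ w) := by
      intro g hg
      have h1 : L (K *ᵥ g) < u := hLlt _ ⟨g, hg, rfl⟩
      have h2 : u < L (-(K *ᵥ c₀)) := hLgt
      rw [hLeq] at h1 h2
      have e1 : (K *ᵥ g) ⬝ᵥ d = g ⬝ᵥ w := by
        rw [dotProduct_comm, symm_dot hsy]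
      have e2 : (-(K *ᵥ c₀)) ⬝ᵥ d = -(c₀ ⬝ᵥ w) := by
        rw [neg_dotProduct, dotProduct_comm, symm_dot hsy]
      rw [e1] at h1; rw [e2] at h2
      linarith
    -- the directional-derivative inequality from optimality
    have hopt : ∀ t : ℝ, 0 < t →
        -t * (c₀ ⬝ᵥ w) - t^2/2 * qd ≤ ∑ i, (φ i (z i + t * w i) - φ i (z i)) := by
      intro t ht
      have h1 := hmin (c₀ + t • d)
      have e1 : K *ᵥ (c₀ + t • d) = fun i => z i + t * w i := by
        funext i
        rw [Matrix.mulVec_add, Matrix.mulVec_smul]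
        simp [hz, hw, smul_eq_mul]
      have e2 : (c₀ + t • d) ⬝ᵥ K *ᵥ (c₀ + t • d)
          = c₀ ⬝ᵥ K *ᵥ c₀ + 2 * t * (c₀ ⬝ᵥ w) + t^2 * qd := by
        rw [Matrix.mulVec_add, Matrix.mulVec_smul, add_dotProduct,
          smul_dotProduct, dotProduct_add, dotProduct_add,
          dotProduct_smul, dotProduct_smul]
        have e3 : d ⬝ᵥ K *ᵥ c₀ = c₀ ⬝ᵥ w := by rw [symm_dot hsy]
        rw [e3]
        simp only [smul_eq_mul, hqd, hw]
        ring
      rw [e2, e1] at h1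
      simp only [hf] at h1
      have h2 : ∑ i, φ i (z i + t * w i) - ∑ i, φ i (z i)
          = ∑ i, (φ i (z i + t * w i) - φ i (z i)) := by
        rw [Finset.sum_sub_distrib]
      rw [← h2]
      linarith
    -- extremal subgradient choice
    set gstar : Fin ℓ → ℝ := fun i => if 0 < w i then b i else a i with hgstar
    have hgbox : gstar ∈ box := by
      intro i _
      simp only [hgstar, Set.mem_Icc]
      split <;> constructor
      · exact hab i
      · exact le_refl _
      · exact le_refl _
      · exact hab i
    have hdirD : ∀ i, dirD (φ i) (z i) (w i) = w i * gstar i := by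
      intro i
      simp only [dirD, hgstar]
      split <;> rfl
    -- the key limit inequality
    have hkey : -(c₀ ⬝ᵥ w) ≤ gstar ⬝ᵥ w := by
      apply le_of_forall_pos_le_add
      intro ε hε
      have hℓpos : (0:ℝ) < (ℓ : ℝ) := by
        have : 0 < ℓ := Fin.pos_iff_nonempty.mpr hne
        exact_mod_cast this
      have hε' : 0 < ε / (2 * ℓ) := by positivity
      choose ts hts0 hts using fun i => exists_slope_le (hφ i) (z i) (w i) hε'
      set t : ℝ := min ((Finset.univ : Finset (Fin ℓ)).inf' (Finset.univ_nonempty) ts)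
        (ε / (1 + qd)) with hT
      have ht0 : 0 < t := by
        apply lt_min
        · exact (Finset.lt_inf'_iff _).mpr (fun i _ => hts0 i)
        · positivity
      have htle : ∀ i, t ≤ ts i := fun i =>
        le_trans (min_le_left _ _) (Finset.inf'_le _ (Finset.mem_univ i))
      have hslope : ∀ i, (φ i (z i + t * w i) - φ i (z i)) / t
          ≤ w i * gstar i + ε / (2 * ℓ) := by
        intro i
        calc (φ i (z i + t * w i) - φ i (z i)) / t
            ≤ (φ i (z i + ts i * w i) - φ i (z i)) / ts i :=
              slope_t_mono (hφ i) (z i) (w i) ht0 (htle i)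
          _ ≤ dirD (φ i) (z i) (w i) + ε / (2 * ℓ) := hts i
          _ = w i * gstar i + ε / (2 * ℓ) := by rw [hdirD]
      have hsum : ∑ i, (φ i (z i + t * w i) - φ i (z i)) / t
          ≤ gstar ⬝ᵥ w + ε / 2 := by
        calc ∑ i, (φ i (z i + t * w i) - φ i (z i)) / t
            ≤ ∑ i, (w i * gstar i + ε / (2 * ℓ)) := Finset.sum_le_sum (fun i _ => hslope i)
          _ = (∑ i, w i * gstar i) + (ℓ : ℝ) * (ε / (2 * ℓ)) := by
              rw [Finset.sum_add_distrib]
              simp [Finset.sum_const, Finset.card_univ, mul_comm]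
          _ = gstar ⬝ᵥ w + ε / 2 := by
              rw [dotProduct]
              congr 1
              · exact Finset.sum_congr rfl (fun i _ => mul_comm _ _)
              · field_simp
      have hdiv : -(c₀ ⬝ᵥ w) - t/2 * qd ≤ ∑ i, (φ i (z i + t * w i) - φ i (z i)) / t := by
        have h4 := hopt t ht0
        rw [← Finset.sum_div, le_div_iff₀ ht0]
        have h6 : (-(c₀ ⬝ᵥ w) - t/2 * qd) * t = -t * (c₀ ⬝ᵥ w) - t^2/2 * qd := by ring
        rw [h6]
        exact h4
      have htq : t/2 * qd ≤ ε/2 := by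
        have h1 : t ≤ ε / (1 + qd) := min_le_right _ _
        have h2 : t * (1 + qd) ≤ ε := by
          rw [← le_div_iff₀ (by positivity : (0:ℝ) < 1 + qd)]
          exact h1
        nlinarith
      linarith
    have := hsep gstar hgbox
    linarith
  obtain ⟨g, hgbox, hgeq⟩ := hmem
  have hgeq' : K *ᵥ g = -(K *ᵥ c₀) := by rw [← Matrix.mulVecLin_apply]; exact hgeq
  refine ⟨g, fun i => ?_, hgeq'⟩
  have hgi := hgbox i (Set.mem_univ i)
  exact mem_subdiff1_of_between (hφ i) (z i) hgi.1 hgi.2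

/-- for additively separable `f(z) = Σᵢ fᵢ(zᵢ)`, there is a
minimizer `c` of `F(c) = f(Kc) + (1/2) cᵀKc` such that for every `i` and every
`αᵢ > 0`, `cᵢ = −J^i_{αᵢ}(αᵢ kᵢᵀc − cᵢ)`, where `J^i_{αᵢ}` is the resolvent of
`(∂fᵢ)⁻¹`. -/
theorem stmt_11 {ℓ : ℕ} (K : Matrix (Fin ℓ) (Fin ℓ) ℝ) (hK : K.PosSemidef)
    (φ : Fin ℓ → ℝ → ℝ) (hφ : ∀ i, ConvexOn ℝ Set.univ (φ i))
    (f : (Fin ℓ → ℝ) → ℝ) (hf : ∀ z, f z = ∑ i, φ i (z i))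
    (hbdd : BddBelow (Set.range f)) :
    ∃ c : Fin ℓ → ℝ,
      (∀ c' : Fin ℓ → ℝ,
        f (K.mulVec c) + (1 / 2) * (c ⬝ᵥ K.mulVec c) ≤
          f (K.mulVec c') + (1 / 2) * (c' ⬝ᵥ K.mulVec c')) ∧
      ∀ (i : Fin ℓ) (αi : ℝ), 0 < αi → ∀ J : ℝ → ℝ,
        (∀ v, ∃ z, J v ∈ subdiff1 (φ i) z ∧ v = J v + αi * z) →
        c i = -J (αi * ((fun j => K j i) ⬝ᵥ c) - c i) := by
  rcases isEmpty_or_nonempty (Fin ℓ) with hemp | hne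
  · refine ⟨0, ?_, ?_⟩
    · intro c'
      have hc' : c' = 0 := funext fun i => (hemp.false i).elim
      rw [hc']
    · intro i
      exact (hemp.false i).elim
  · have hsy := transpose_of_posSemidef hK
    have hφcont : ∀ i, Continuous (φ i) := by
      intro i
      have := (hφ i).continuousOn isOpen_univ
      rwa [continuousOn_univ] at this
    have hfc : Continuous f := by
      have hfeq : f = fun z => ∑ i, φ i (z i) := funext hf
      rw [hfeq]
      exact continuous_finset_sum _ fun i _ => (hφcont i).comp (continuous_apply i)
    obtain ⟨m, hm⟩ := hbdd
    have hm' : ∀ z, m ≤ f z := fun z => hm ⟨z, rfl⟩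
    obtain ⟨c₀, hmin⟩ := exists_minimizer K hK f hfc m hm'
    obtain ⟨g, hgsub, hgeq⟩ := exists_subgradient hne K hK φ hφ f hf c₀ hmin
    set c : Fin ℓ → ℝ := -g with hc
    have hKc : K *ᵥ c = K *ᵥ c₀ := by
      rw [hc, Matrix.mulVec_neg, hgeq, neg_neg]
    have hQ : c ⬝ᵥ K *ᵥ c = c₀ ⬝ᵥ K *ᵥ c₀ := by
      rw [hKc, symm_dot hsy, hKc]
    have hsym_entry : ∀ p q, K p q = K q p := by
      intro p q
      calc K p q = Kᵀ q p := (Matrix.transpose_apply K q p).symm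
        _ = K q p := by rw [hsy]
    refine ⟨c, ?_, ?_⟩
    · intro c'
      have h1 : f (K *ᵥ c) + 1/2 * (c ⬝ᵥ K *ᵥ c) = f (K *ᵥ c₀) + 1/2 * (c₀ ⬝ᵥ K *ᵥ c₀) := by
        rw [hQ, hKc]
      rw [h1]
      exact hmin c'
    · intro i αi hαi J hJ
      have hcol : (fun j => K j i) ⬝ᵥ c = (K *ᵥ c) i := by
        simp only [Matrix.mulVec, dotProduct]
        exact Finset.sum_congr rfl fun j _ => by rw [hsym_entry j i]
      set v : ℝ := αi * ((fun j => K j i) ⬝ᵥ c) - c i with hv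
      obtain ⟨zz, hmem, heq⟩ := hJ v
      have hci : -(c i) = g i := by simp [hc]
      have hsubc : -(c i) ∈ subdiff1 (φ i) ((K *ᵥ c) i) := by
        rw [hci, hKc]
        exact hgsub i
      have h1 := hmem ((K *ᵥ c) i)
      have h2 := hsubc zz
      have hvz : v = αi * (K *ᵥ c) i - c i := by rw [hv, hcol]
      have h3 : J v + c i = αi * ((K *ᵥ c) i - zz) := by
        have : αi * ((K *ᵥ c) i - zz) = αi * (K *ᵥ c) i - αi * zz := by ring
        rw [this]
        linarith [heq, hvz]
      have h4 : (J v + c i) * ((K *ᵥ c) i - zz) ≤ 0 := by nlinarith [h1, h2]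
      have h5' : αi * ((K *ᵥ c) i - zz) ^ 2 ≤ 0 := by
        calc αi * ((K *ᵥ c) i - zz) ^ 2 = (J v + c i) * ((K *ᵥ c) i - zz) := by rw [h3]; ring
          _ ≤ 0 := h4
      have h5 : ((K *ᵥ c) i - zz) ^ 2 ≤ 0 :=
        le_of_mul_le_mul_left (by linarith : αi * ((K *ᵥ c) i - zz) ^ 2 ≤ αi * 0) hαi
      have h6 : (K *ᵥ c) i - zz = 0 := by
        have := le_antisymm h5 (sq_nonneg _)
        exact pow_eq_zero_iff (by norm_num) |>.mp this
      have h7 : J v + c i = 0 := by rw [h3, h6, mul_zero]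
      linarith
end

section
/- Let f(z) = Σᵢ fᵢ(zᵢ) with convex fᵢ, K symmetric positive semidefinite with k_{ii} > 0, F(c) = f(Kc) + (1/2)cᵀKc, and let A_i(c) = c + e_i t_i(c), where t_i(c) is the minimizer over t of F(c + e_i t) (exact line search along coordinate i). Then F(A_i(c)) ≤ F(c) − (k_{ii}/2)·t_i(c)², i.e., each coordinate-descent update decreases F by at least (k_{ii}/2) times the squared step size. -/
open scoped Matrix

/-- sufficient decrease of the exact coordinate line search. If
`t` minimizes `t ↦ F(c + t eᵢ)` for `F(c) = f(Kc) + (1/2) cᵀKc` with `f`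
additively separable convex and `k_{ii} > 0`, then
`F(c + t eᵢ) ≤ F(c) − (k_{ii}/2) t²`. -/
theorem stmt_13 {ℓ : ℕ} (K : Matrix (Fin ℓ) (Fin ℓ) ℝ) (hK : K.PosSemidef)
    (φ : Fin ℓ → ℝ → ℝ) (hφ : ∀ i, ConvexOn ℝ Set.univ (φ i))
    (f : (Fin ℓ → ℝ) → ℝ) (hf : ∀ z, f z = ∑ i, φ i (z i))
    (F : (Fin ℓ → ℝ) → ℝ)
    (hF : ∀ c, F c = f (K.mulVec c) + (1 / 2) * (c ⬝ᵥ K.mulVec c))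
    (i : Fin ℓ) (hKii : 0 < K i i) (c : Fin ℓ → ℝ) (t : ℝ)
    (ht : ∀ s : ℝ, F (c + t • (Pi.single i 1 : Fin ℓ → ℝ)) ≤ F (c + s • (Pi.single i 1 : Fin ℓ → ℝ))) :
    F (c + t • (Pi.single i 1 : Fin ℓ → ℝ)) ≤ F c - (K i i / 2) * t ^ 2 := by
  set e : Fin ℓ → ℝ := (Pi.single i 1 : Fin ℓ → ℝ) with he
  have hsym : ∀ a b, K a b = K b a := by
    intro a b
    have h := hK.1
    rw [Matrix.IsHermitian] at h
    conv_lhs => rw [← h]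
    simp [Matrix.conjTranspose_apply]
  have hmve : K.mulVec e = fun j => K j i := by
    ext j; simp [he, Matrix.mulVec_single]
  -- value of F along the line
  have hg : ∀ s : ℝ, F (c + s • e) =
      (∑ j, φ j (K.mulVec c j + s * K j i)) + (1 / 2) * (c ⬝ᵥ K.mulVec c)
        + s * K.mulVec c i + (K i i / 2) * s ^ 2 := by
    intro s
    rw [hF, hf]
    have hmv : ∀ j, K.mulVec (c + s • e) j = K.mulVec c j + s * K j i := by
      intro j
      rw [Matrix.mulVec_add, Matrix.mulVec_smul, hmve]
      simp
    have hq : (c + s • e) ⬝ᵥ K.mulVec (c + s • e)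
        = c ⬝ᵥ K.mulVec c + 2 * s * K.mulVec c i + K i i * s ^ 2 := by
      rw [Matrix.mulVec_add, Matrix.mulVec_smul, hmve]
      rw [add_dotProduct, dotProduct_add, dotProduct_add]
      have h1 : c ⬝ᵥ (s • fun j => K j i) = s * K.mulVec c i := by
        rw [dotProduct_smul]
        simp only [smul_eq_mul]
        congr 1
        simp only [dotProduct, Matrix.mulVec]
        exact Finset.sum_congr rfl fun j _ => by rw [hsym j i]; ring
      have h2 : (s • e) ⬝ᵥ K.mulVec c = s * K.mulVec c i := by
        rw [smul_dotProduct]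
        simp [he, dotProduct, Pi.single_apply, ite_mul]
      have h3 : (s • e) ⬝ᵥ (s • fun j => K j i) = K i i * s ^ 2 := by
        rw [smul_dotProduct, dotProduct_smul]
        simp [he, dotProduct, Pi.single_apply, ite_mul]
        ring
      rw [h1, h2, h3]; ring
    rw [hq]
    have hs : ∑ j, φ j (K.mulVec (c + s • e) j) = ∑ j, φ j (K.mulVec c j + s * K j i) :=
      Finset.sum_congr rfl fun j _ => by rw [hmv j]
    rw [hs]
    ring
  have hg0 : F c = (∑ j, φ j (K.mulVec c j)) + (1 / 2) * (c ⬝ᵥ K.mulVec c) := by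
    have := hg 0
    simp at this
    simpa using this
  -- convexity step
  have key : ∀ l : ℝ, 0 ≤ l → l < 1 →
      F (c + t • e) ≤ F c - (K i i / 2) * l * t ^ 2 := by
    intro l hl0 hl1
    have hsum : (∑ j, φ j (K.mulVec c j + (l * t) * K j i)) ≤
        l * (∑ j, φ j (K.mulVec c j + t * K j i)) + (1 - l) * (∑ j, φ j (K.mulVec c j)) := by
      rw [Finset.mul_sum, Finset.mul_sum, ← Finset.sum_add_distrib]
      refine Finset.sum_le_sum fun j _ => ?_
      have hb : (0:ℝ) ≤ 1 - l := by linarith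
      have hc := (hφ j).2 (Set.mem_univ (K.mulVec c j + t * K j i)) (Set.mem_univ (K.mulVec c j))
        hl0 hb (by ring)
      simp only [smul_eq_mul] at hc
      have : K.mulVec c j + l * t * K j i
          = l * (K.mulVec c j + t * K j i) + (1 - l) * K.mulVec c j := by ring
      rw [this]
      exact hc
    have h1 := ht (l * t)
    rw [hg (l * t), hg t] at h1
    have h2 : F (c + t • e) ≤ l * F (c + t • e) + (1 - l) * F c
        - (K i i / 2) * (l - l ^ 2) * t ^ 2 := by
      rw [hg t, hg0]
      nlinarith [hsum, h1]
    have h1l : 0 < 1 - l := by linarith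
    nlinarith [h2, h1l, sq_nonneg t]
  -- take l → 1
  by_contra hcon
  push_neg at hcon
  set δ : ℝ := F (c + t • e) - (F c - (K i i / 2) * t ^ 2) with hδ
  have hδpos : 0 < δ := sub_pos.mpr hcon
  have ht2 : 0 < t ^ 2 := by
    rcases eq_or_ne t 0 with h | h
    · exfalso
      have hk0 := key 0 le_rfl one_pos
      subst h
      norm_num at hk0 hcon
    · positivity
  set l : ℝ := 1 - min 1 (δ / (K i i * t ^ 2)) with hl
  have hmpos : 0 < min 1 (δ / (K i i * t ^ 2)) := lt_min one_pos (by positivity)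
  have hmle : min 1 (δ / (K i i * t ^ 2)) ≤ 1 := min_le_left _ _
  have hl0 : 0 ≤ l := by rw [hl]; linarith
  have hl1 : l < 1 := by rw [hl]; linarith
  have hk := key l hl0 hl1
  have hrem : (K i i / 2) * (1 - l) * t ^ 2 < δ := by
    have h1 : 1 - l = min 1 (δ / (K i i * t ^ 2)) := by rw [hl]; ring
    have h2 : min 1 (δ / (K i i * t ^ 2)) ≤ δ / (K i i * t ^ 2) := min_le_right _ _
    have h3 : (K i i / 2) * (1 - l) * t ^ 2 ≤ (K i i / 2) * (δ / (K i i * t ^ 2)) * t ^ 2 := by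
      rw [h1]
      have hpos : 0 ≤ (K i i / 2) * t ^ 2 := by positivity
      nlinarith
    have h4 : (K i i / 2) * (δ / (K i i * t ^ 2)) * t ^ 2 = δ / 2 := by
      have htne : t ≠ 0 := by rintro rfl; simp at ht2
      field_simp
    linarith
  have hfin : F (c + t • e) < F (c + t • e) := by
    calc F (c + t • e) ≤ F c - (K i i / 2) * l * t ^ 2 := hk
    _ = F c - (K i i / 2) * t ^ 2 + (K i i / 2) * (1 - l) * t ^ 2 := by ring
    _ < F c - (K i i / 2) * t ^ 2 + δ := by linarith
    _ = F (c + t • e) := by rw [hδ]; ring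
  exact absurd hfin (lt_irrefl _)
end
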